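/- arXiv:2002.12194 — 8 statements merged into one kernel-verified Lean document; each statement's English description precedes it below -/
import Mathlib

section
/- Let g be the formal power series over ℚ given by g = Σ_{n≥0} (G n / n!)·Xⁿ. Then (1 − X − (1/2)·X²) · g = 1 in ℚ⟦X⟧; equivalently, the exponential generating function of G is 1/(1 − x − x²/2). -/
/-!
Let `g` be the exponential generating function of `G`. In the recurrence for `G (n + 1)` the
first sum is `n !` times the `n`-th coefficient of `g ^ 2`, the second `n !` times that of
`X * g ^ 2`, so the recurrence says `g' = (1 + X) * g ^ 2 = p' * g ^ 2` with `p = X + X ^ 2 / 2`.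
Then `h = (1 - p) * g - 1` satisfies the linear equation `h' = p' * g * h` with `h(0) = 0`, which
forces `h = 0`.
-/

open Finset PowerSeries
open scoped Nat

def binomConv {R : Type*} [Semiring R] (a b : ℕ → R) (n : ℕ) : R :=
  ∑ p ∈ antidiagonal n, n.choose p.1 * a p.1 * b p.2

theorem Nat.cast_binomConv {R : Type*} [Semiring R] (a b : ℕ → ℕ) (n : ℕ) :
    ((binomConv a b n : ℕ) : R) = binomConv (fun i => (a i : R)) (fun i => (b i : R)) n := by
  simp [binomConv]

theorem sum_Icc_one_eq_sum_range {M : Type*} [AddCommMonoid M] (f : ℕ → M) (n : ℕ) :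
    ∑ i ∈ Icc 1 n, f i = ∑ j ∈ range n, f (j + 1) := by
  rw [range_eq_Ico, sum_Ico_add' f 0 n 1, zero_add, Ico_add_one_right_eq_Icc]

theorem sum_Icc_choose_mul_eq_binomConv (G : ℕ → ℕ) (m : ℕ) :
    ∑ i ∈ Icc 1 (m + 1), m.choose (i - 1) * G (m + 1 - i) * G (i - 1) = binomConv G G m := by
  rw [binomConv, Nat.sum_antidiagonal_eq_sum_range_succ_mk, sum_Icc_one_eq_sum_range]
  refine sum_congr rfl fun j _ => ?_
  simp only [add_tsub_cancel_right, Nat.add_sub_add_right, Nat.cast_id, mul_right_comm]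

theorem sum_Icc_sub_mul_choose_mul_eq_mul_binomConv (G : ℕ → ℕ) (m : ℕ) :
    ∑ i ∈ Icc 1 m, (m + 1 - i) * m.choose (i - 1) * G (m + 1 - i - 1) * G (i - 1) =
      m * binomConv G G (m - 1) := by
  cases m with
  | zero => simp
  | succ k =>
    rw [binomConv, Nat.sum_antidiagonal_eq_sum_range_succ_mk, mul_sum, sum_Icc_one_eq_sum_range]
    refine sum_congr rfl fun j _ => ?_
    simp only [add_tsub_cancel_right, Nat.sub_sub, Nat.add_sub_add_right, Nat.cast_id]
    rw [mul_comm (k + 1 - j), ← Nat.choose_mul_succ_eq]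
    ring

namespace PowerSeries

section ODE

variable {R : Type*} [CommRing R] [IsAddTorsionFree R]

theorem eq_zero_of_derivative_eq_mul {h q : R⟦X⟧} (hd : d⁄dX R h = q * h)
    (h0 : constantCoeff h = 0) : h = 0 := by
  ext n
  induction n using Nat.strong_induction_on with
  | _ n ih =>
    cases n with
    | zero => simpa using h0
    | succ m =>
      have hqh : coeff m (q * h) = 0 := by
        rw [coeff_mul]
        exact sum_eq_zero fun p hp => by
          rw [ih p.2 (by linarith [mem_antidiagonal.mp hp]), map_zero, mul_zero]
      have := coeff_derivative h m
      rw [hd, hqh, eq_comm, mul_comm, ← Nat.cast_succ, ← nsmul_eq_mul, smul_eq_zero] at this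
      simpa using this.resolve_left (Nat.succ_ne_zero m)

theorem one_sub_mul_eq_one_of_derivative_eq {g p : R⟦X⟧}
    (hg : d⁄dX R g = d⁄dX R p * g ^ 2) (hg0 : constantCoeff g = 1) (hp0 : constantCoeff p = 0) :
    (1 - p) * g = 1 := by
  refine sub_eq_zero.mp (eq_zero_of_derivative_eq_mul (q := d⁄dX R p * g) ?_ (by simp [hg0, hp0]))
  simp only [map_sub, Derivation.leibniz, derivative_one, smul_eq_mul, hg]
  ring

end ODE

variable {K : Type*} [Field K]

def egf (a : ℕ → K) : K⟦X⟧ := mk fun n => a n / n !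

@[simp]
theorem coeff_egf (a : ℕ → K) (n : ℕ) : coeff n (egf a) = a n / n ! := coeff_mk _ _

variable [CharZero K]

theorem egf_mul (a b : ℕ → K) : egf a * egf b = egf (binomConv a b) := by
  ext n
  simp only [coeff_mul, coeff_egf, binomConv, sum_div]
  refine sum_congr rfl fun p hp => ?_
  obtain rfl := mem_antidiagonal.mp hp
  have hc : ((p.1 + p.2).choose p.1 * p.1 ! * p.2 ! : K) = (p.1 + p.2)! := by
    exact_mod_cast Nat.choose_symm_add ▸ Nat.add_choose_mul_factorial_mul_factorial p.1 p.2
  have hc0 : ((p.1 + p.2).choose p.1 : K) ≠ 0 :=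
    Nat.cast_ne_zero.mpr (Nat.choose_pos (Nat.le_add_right _ _)).ne'
  rw [div_mul_div_comm, ← hc]
  field_simp

theorem derivative_egf (a : ℕ → K) : d⁄dX K (egf a) = egf fun n => a (n + 1) := by
  ext n
  rw [coeff_derivative, coeff_egf, coeff_egf, Nat.factorial_succ]
  push_cast
  field_simp

theorem X_mul_egf (a : ℕ → K) : X * egf a = egf fun n => n * a (n - 1) := by
  ext n
  cases n with
  | zero => simp
  | succ m =>
    rw [mul_comm, coeff_succ_mul_X, coeff_egf, coeff_egf, Nat.factorial_succ, add_tsub_cancel_right]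
    push_cast
    field_simp

theorem derivative_egf_of_recurrence {a : ℕ → K}
    (ha : ∀ m, a (m + 1) = binomConv a a m + m * binomConv a a (m - 1)) :
    d⁄dX K (egf a) = (1 + X) * egf a ^ 2 := by
  ext n
  rw [derivative_egf, sq, egf_mul, add_mul, one_mul, X_mul_egf, map_add]
  simp only [coeff_egf, ha, add_div]

end PowerSeries

/-- The exponential generating function of the sequence `G` counting complete
τ-exceptional sequences over `Γ_n^2` is `1 / (1 - x - x²/2)`. -/
theorem egf_G (G : ℕ → ℕ) (hG0 : G 0 = 1)
    (hG : ∀ n : ℕ, 1 ≤ n →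
      G n = (∑ i ∈ Finset.Icc 1 n,
              Nat.choose (n - 1) (i - 1) * G (n - i) * G (i - 1)) +
            (∑ i ∈ Finset.Icc 1 (n - 1),
              (n - i) * Nat.choose (n - 1) (i - 1) * G (n - i - 1) * G (i - 1))) :
    (1 - PowerSeries.X - PowerSeries.C (R := ℚ) (1 / 2) * PowerSeries.X ^ 2) *
      PowerSeries.mk (fun n => (G n : ℚ) / (Nat.factorial n : ℚ)) = 1 := by
  have hrec (m : ℕ) : G (m + 1) = binomConv G G m + m * binomConv G G (m - 1) := by
    simpa only [add_tsub_cancel_right, sum_Icc_choose_mul_eq_binomConv,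
      sum_Icc_sub_mul_choose_mul_eq_mul_binomConv] using hG (m + 1) (Nat.le_add_left 1 m)
  have hp : d⁄dX ℚ (X + C (1 / 2) * X ^ 2) = 1 + X := by
    simp [← mul_assoc, ← map_ofNat C 2, ← map_mul]
  have hderiv : d⁄dX ℚ (egf fun n => (G n : ℚ)) =
      d⁄dX ℚ (X + C (1 / 2) * X ^ 2) * (egf fun n => (G n : ℚ)) ^ 2 := by
    rw [hp]
    refine derivative_egf_of_recurrence fun m => ?_
    rw [← Nat.cast_binomConv, ← Nat.cast_binomConv]
    exact_mod_cast hrec m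
  have h := one_sub_mul_eq_one_of_derivative_eq hderiv (by simp [egf, hG0]) (by simp)
  rwa [← sub_sub] at h
end

section
/- For every natural number n, G n = F n, i.e. G n equals the number of ordered set partitions of an n-element set into blocks of size at most 2 (the restricted Fubini number F_{n,≤2}). -/
/-- `F n` is the number of ordered set partitions of `Fin n` with blocks of
size at most `2` (the restricted Fubini number `F_{n, ≤ 2}`). -/
noncomputable def restrictedFubini (n : ℕ) : ℕ :=
  Nat.card {B : List (Finset (Fin n)) //
    (∀ b ∈ B, b.Nonempty ∧ b.card ≤ 2) ∧
    B.Pairwise Disjoint ∧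
    B.foldr (· ∪ ·) ∅ = Finset.univ}

/-!
Both sides satisfy the paper's recurrence with the same initial value. For ordered partitions,
fix an element `x` and cut an ordered partition of `s` at the block `b ∋ x`: the blocks before
`b` form an ordered partition of some `T ⊆ s \ b`, those after it one of `(s \ b) \ T`, and this
is a bijection. The number of ordered partitions of a finset only depends on its cardinality, so
summing over `b = {x}` and over the `n - 1` blocks `b = {x, y}` gives the two sums of the
recurrence, up to `(n - 1) * C(n - 2, j) = (n - 1 - j) * C(n - 1, j)`.
-/

open Finset

variable {α β : Type*} [DecidableEq α] [DecidableEq β] {k : ℕ}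

def IsOrderedPartition (k : ℕ) (s : Finset α) (B : List (Finset α)) : Prop :=
  (∀ b ∈ B, b.Nonempty ∧ b.card ≤ k) ∧ B.Pairwise Disjoint ∧ B.foldr (· ∪ ·) ∅ = s

noncomputable def orderedPartitionCount (k : ℕ) (s : Finset α) : ℕ :=
  Nat.card {B // IsOrderedPartition k s B}

/-- The restricted Fubini number `F_{n, ≤ k}`. -/
noncomputable def boundedFubini (k n : ℕ) : ℕ :=
  orderedPartitionCount k (univ : Finset (Fin n))

theorem restrictedFubini_eq_boundedFubini (n : ℕ) : restrictedFubini n = boundedFubini 2 n :=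
  rfl

section OrderedPartition

variable {s b : Finset α} {B B₁ B₂ : List (Finset α)}

theorem isOrderedPartition_nil : IsOrderedPartition k s [] ↔ s = ∅ := by
  simp [IsOrderedPartition, eq_comm]

theorem disjoint_foldr_union : Disjoint b (B.foldr (· ∪ ·) ∅) ↔ ∀ c ∈ B, Disjoint b c := by
  induction B with
  | nil => simp
  | cons c B ih => simp [disjoint_union_right, ih]

theorem disjoint_and_union_eq_iff {u : Finset α} :
    Disjoint b u ∧ b ∪ u = s ↔ b ⊆ s ∧ u = s \ b := by
  constructor
  · rintro ⟨hd, rfl⟩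
    exact ⟨subset_union_left, (union_sdiff_cancel_left hd).symm⟩
  · rintro ⟨hs, rfl⟩
    exact ⟨disjoint_sdiff, union_sdiff_of_subset hs⟩

theorem isOrderedPartition_cons :
    IsOrderedPartition k s (b :: B) ↔
      (b.Nonempty ∧ b.card ≤ k) ∧ b ⊆ s ∧ IsOrderedPartition k (s \ b) B := by
  simp only [IsOrderedPartition, List.forall_mem_cons, List.pairwise_cons, List.foldr_cons,
    ← disjoint_foldr_union]
  have := disjoint_and_union_eq_iff (s := s) (b := b) (u := B.foldr (· ∪ ·) ∅)
  tauto

theorem isOrderedPartition_append :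
    IsOrderedPartition k s (B₁ ++ B₂) ↔
      ∃ T ⊆ s, IsOrderedPartition k T B₁ ∧ IsOrderedPartition k (s \ T) B₂ := by
  induction B₁ generalizing s with
  | nil => simp [isOrderedPartition_nil]
  | cons c B₁ ih =>
    simp only [List.cons_append, isOrderedPartition_cons, ih]
    constructor
    · rintro ⟨hc, hcs, T, hT, h₁, h₂⟩
      have hcT : Disjoint c T := (subset_sdiff.1 hT).2.symm
      refine ⟨c ∪ T, union_subset hcs (hT.trans sdiff_subset), ⟨hc, subset_union_left, ?_⟩, ?_⟩
      · rwa [union_sdiff_cancel_left hcT]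
      · rwa [sdiff_sdiff_left, sup_eq_union] at h₂
    · rintro ⟨T, hT, ⟨hc, hcT, h₁⟩, h₂⟩
      refine ⟨hc, hcT.trans hT, T \ c, sdiff_subset_sdiff hT le_rfl, h₁, ?_⟩
      rwa [sdiff_sdiff_left, sup_eq_union, union_sdiff_of_subset hcT]

theorem isOrderedPartition_append_cons :
    IsOrderedPartition k s (B₁ ++ b :: B₂) ↔ (b.Nonempty ∧ b.card ≤ k) ∧ b ⊆ s ∧
      ∃ T ⊆ s \ b, IsOrderedPartition k T B₁ ∧ IsOrderedPartition k ((s \ b) \ T) B₂ := by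
  simp only [isOrderedPartition_append, isOrderedPartition_cons, subset_sdiff,
    sdiff_sdiff_comm (a := s) (b := b)]
  constructor
  · rintro ⟨T, hTs, h₁, hb, ⟨hbs, hbT⟩, h₂⟩
    exact ⟨hb, hbs, T, ⟨hTs, hbT.symm⟩, h₁, h₂⟩
  · rintro ⟨hb, hbs, T, ⟨hTs, hTb⟩, h₁, h₂⟩
    exact ⟨T, hTs, h₁, hb, ⟨hbs, hTb.symm⟩, h₂⟩

theorem IsOrderedPartition.subset_of_mem (h : IsOrderedPartition k s B) (hb : b ∈ B) :
    b ⊆ s := by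
  obtain ⟨B₁, B₂, rfl⟩ := List.append_of_mem hb
  exact (isOrderedPartition_append_cons.1 h).2.1

theorem IsOrderedPartition.exists_append_cons {x : α} (h : IsOrderedPartition k s B)
    (hx : x ∈ s) : ∃ B₁ b B₂, B = B₁ ++ b :: B₂ ∧ x ∈ b := by
  induction B generalizing s with
  | nil => simp [isOrderedPartition_nil.1 h] at hx
  | cons c B ih =>
    by_cases hxc : x ∈ c
    · exact ⟨[], c, B, rfl, hxc⟩
    · obtain ⟨B₁, b, B₂, rfl, hxb⟩ :=
        ih (isOrderedPartition_cons.1 h).2.2 (mem_sdiff.2 ⟨hx, hxc⟩)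
      exact ⟨c :: B₁, b, B₂, rfl, hxb⟩

theorem finite_setOf_isOrderedPartition (k : ℕ) (s : Finset α) :
    {B | IsOrderedPartition k s B}.Finite := by
  refine (Set.finite_range fun l : {l : List s.powerset // l.Nodup} =>
    l.1.map Subtype.val).subset fun B hB => ?_
  lift B to List s.powerset using fun b hb => mem_powerset.2 (hB.subset_of_mem hb)
  refine ⟨⟨B, List.Nodup.of_map Subtype.val (hB.2.1.imp_of_mem ?_)⟩, rfl⟩
  rintro b c hb - hbc rfl
  exact (hB.1 b hb).1.ne_empty ((disjoint_self_iff_empty b).1 hbc)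

instance (k : ℕ) (s : Finset α) : Finite {B // IsOrderedPartition k s B} :=
  (finite_setOf_isOrderedPartition k s).to_subtype

end OrderedPartition

theorem foldr_union_map (f : α ↪ β) (B : List (Finset α)) :
    (B.map (map f)).foldr (· ∪ ·) ∅ = (B.foldr (· ∪ ·) ∅).map f := by
  induction B with
  | nil => simp
  | cons b B ih => simp [ih, map_union]

theorem isOrderedPartition_map (f : α ↪ β) {s : Finset α} {B : List (Finset α)} :
    IsOrderedPartition k (s.map f) (B.map (map f)) ↔ IsOrderedPartition k s B := by
  simp [IsOrderedPartition, List.pairwise_map, foldr_union_map]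

theorem orderedPartitionCount_map (f : α ↪ β) (s : Finset α) :
    orderedPartitionCount k (s.map f) = orderedPartitionCount k s := by
  refine (Nat.card_eq_of_bijective (fun B : {B // IsOrderedPartition k s B} =>
    ⟨B.1.map (map f), (isOrderedPartition_map f).2 B.2⟩) ⟨?_, ?_⟩).symm
  · exact fun B C h =>
      Subtype.ext (List.map_injective_iff.2 (map_injective f) (congrArg Subtype.val h))
  · rintro ⟨B', hB'⟩
    have exists_map_eq : ∀ L : List (Finset β), (∀ b ∈ L, b ⊆ s.map f) →
        ∃ B : List (Finset α), B.map (map f) = L := by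
      intro L hL
      induction L with
      | nil => exact ⟨[], rfl⟩
      | cons b L ih =>
        obtain ⟨c, -, rfl⟩ := subset_map_iff.1 (hL b List.mem_cons_self)
        obtain ⟨B, rfl⟩ := ih fun b hb => hL b (List.mem_cons_of_mem _ hb)
        exact ⟨c :: B, rfl⟩
    obtain ⟨B, rfl⟩ := exists_map_eq B' fun b hb => hB'.subset_of_mem hb
    exact ⟨⟨B, (isOrderedPartition_map f).1 hB'⟩, rfl⟩

theorem orderedPartitionCount_eq_boundedFubini (s : Finset α) :
    orderedPartitionCount k s = boundedFubini k s.card := by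
  rw [boundedFubini, ← univ_map_equiv_to_embedding s.equivFin, orderedPartitionCount_map,
    ← orderedPartitionCount_map (Function.Embedding.subtype (· ∈ s)), univ_eq_attach,
    attach_map_val]

theorem orderedPartitionCount_empty (k : ℕ) : orderedPartitionCount k (∅ : Finset α) = 1 := by
  have h : ∀ B, IsOrderedPartition k (∅ : Finset α) B ↔ B = [] := by
    rintro (_ | ⟨b, B⟩)
    · simp [isOrderedPartition_nil]
    · simp only [isOrderedPartition_cons, subset_empty, reduceCtorEq, iff_false]
      rintro ⟨⟨hb, -⟩, rfl, -⟩
      exact not_nonempty_empty hb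
  rw [orderedPartitionCount, Nat.card_eq_one_iff_unique]
  exact ⟨⟨fun B C => Subtype.ext (((h _).1 B.2).trans ((h _).1 C.2).symm)⟩,
    ⟨⟨[], (h _).2 rfl⟩⟩⟩

theorem boundedFubini_zero (k : ℕ) : boundedFubini k 0 = 1 := by
  rw [boundedFubini, univ_eq_empty, orderedPartitionCount_empty]

theorem orderedPartitionCount_eq_sum {s : Finset α} {x : α} (hx : x ∈ s) :
    orderedPartitionCount k s = ∑ b ∈ s.powerset with x ∈ b ∧ b.card ≤ k,
      ∑ T ∈ (s \ b).powerset,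
        orderedPartitionCount k T * orderedPartitionCount k ((s \ b) \ T) := by
  set blocks := {b ∈ s.powerset | x ∈ b ∧ b.card ≤ k}
  have mem_blocks {b} : b ∈ blocks ↔ b ⊆ s ∧ x ∈ b ∧ b.card ≤ k := by
    rw [mem_filter, mem_powerset]
  let glue : (Σ b : blocks, Σ T : (s \ b.1).powerset, {B // IsOrderedPartition k T B} ×
      {B // IsOrderedPartition k ((s \ b.1) \ T) B}) → {B // IsOrderedPartition k s B} :=
    fun ⟨⟨b, hb⟩, ⟨T, hT⟩, ⟨B₁, h₁⟩, ⟨B₂, h₂⟩⟩ => ⟨B₁ ++ b :: B₂, by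
      obtain ⟨hbs, hxb, hbk⟩ := mem_blocks.1 hb
      exact isOrderedPartition_append_cons.2
        ⟨⟨⟨x, hxb⟩, hbk⟩, hbs, T, mem_powerset.1 hT, h₁, h₂⟩⟩
  have not_mem {c U : Finset α} {B : List (Finset α)} (hc : c ∈ blocks) (hxU : x ∉ U)
      (h : IsOrderedPartition k U B) : c ∉ B := fun hcB =>
    hxU (h.subset_of_mem hcB (mem_blocks.1 hc).2.1)
  have hglue : Function.Bijective glue := by
    constructor
    · rintro ⟨⟨b, hb⟩, ⟨T, hT⟩, ⟨B₁, h₁⟩, ⟨B₂, h₂⟩⟩ ⟨⟨b', hb'⟩, ⟨T', _⟩, ⟨B₁', h₁'⟩, ⟨B₂', _⟩⟩ h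
      -- `x` lies in `b` and in no block of `B₁` or `B₂`, so `b'` sits at the same place as `b`
      have hxb := (mem_blocks.1 hb).2.1
      have hxT : x ∉ T := fun hxT => (mem_sdiff.1 (mem_powerset.1 hT hxT)).2 hxb
      obtain ⟨rfl, rfl, rfl⟩ := (List.append_cons_inj_of_notMem (not_mem hb' hxT h₁)
        (not_mem hb' (fun h => (mem_sdiff.1 (mem_sdiff.1 h).1).2 hxb) h₂)).1
        (congrArg Subtype.val h)
      obtain rfl : T = T' := h₁.2.2.symm.trans h₁'.2.2
      rfl
    · rintro ⟨B, hB⟩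
      obtain ⟨B₁, b, B₂, rfl, hxb⟩ := hB.exists_append_cons hx
      obtain ⟨hb, hbs, T, hT, h₁, h₂⟩ := isOrderedPartition_append_cons.1 hB
      exact ⟨⟨⟨b, mem_blocks.2 ⟨hbs, hxb, hb.2⟩⟩, ⟨T, mem_powerset.2 hT⟩, ⟨B₁, h₁⟩, ⟨B₂, h₂⟩⟩,
        rfl⟩
  rw [orderedPartitionCount, ← Nat.card_eq_of_bijective glue hglue, Nat.card_sigma,
    ← sum_coe_sort blocks]
  refine sum_congr rfl fun b _ => ?_
  rw [Nat.card_sigma]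
  simp only [Nat.card_prod]
  exact sum_coe_sort _ fun T =>
    orderedPartitionCount k T * orderedPartitionCount k ((s \ b) \ T)

section Sums

variable {M : Type*} [AddCommMonoid M]

theorem sum_powerset_filter_mem_card_le {s : Finset α} {x : α} (hx : x ∈ s) (k : ℕ)
    (f : Finset α → M) :
    ∑ b ∈ s.powerset with x ∈ b ∧ b.card ≤ k, f b =
      ∑ c ∈ (s.erase x).powerset with c.card < k, f (insert x c) := by
  refine sum_nbij' (·.erase x) (insert x) ?_ ?_ ?_ ?_ ?_
  · intro b hb
    simp only [mem_filter, mem_powerset] at hb ⊢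
    have := card_pos.2 ⟨x, hb.2.1⟩
    exact ⟨erase_subset_erase x hb.1, by rw [card_erase_of_mem hb.2.1]; omega⟩
  · intro c hc
    simp only [mem_filter, mem_powerset, subset_erase] at hc ⊢
    exact ⟨insert_subset hx hc.1.1, mem_insert_self x c, (card_insert_le x c).trans hc.2⟩
  · intro b hb
    exact insert_erase (mem_filter.1 hb).2.1
  · intro c hc
    exact erase_insert (subset_erase.1 (mem_powerset.1 (mem_filter.1 hc).1)).2
  · intro b hb
    rw [insert_erase (mem_filter.1 hb).2.1]

theorem sum_powerset_filter_card_lt {ι : Type*} (u : Finset ι) (k : ℕ) (f : ℕ → M) :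
    ∑ c ∈ u.powerset with c.card < k, f c.card = ∑ m ∈ range k, u.card.choose m • f m := by
  rw [← sum_fiberwise_of_maps_to (g := card) (t := range k) (by simp)]
  refine sum_congr rfl fun m hm => ?_
  have : {c ∈ {c ∈ u.powerset | c.card < k} | c.card = m} = powersetCard m u := by
    ext c
    simp only [mem_filter, mem_powerset, mem_powersetCard]
    have := mem_range.1 hm
    constructor
    · exact fun h => ⟨h.1.1, h.2⟩
    · exact fun h => ⟨⟨h.1, h.2 ▸ this⟩, h.2⟩
  rw [this, sum_congr rfl fun c hc => by rw [(mem_powersetCard.1 hc).2], sum_const,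
    card_powersetCard]

end Sums

theorem sum_powerset_orderedPartitionCount_mul (u : Finset α) :
    ∑ T ∈ u.powerset, orderedPartitionCount k T * orderedPartitionCount k (u \ T) =
      ∑ j ∈ range (u.card + 1),
        u.card.choose j * (boundedFubini k j * boundedFubini k (u.card - j)) := by
  calc _ = ∑ T ∈ u.powerset, boundedFubini k T.card * boundedFubini k (u.card - T.card) := by
        refine sum_congr rfl fun T hT => ?_
        rw [orderedPartitionCount_eq_boundedFubini, orderedPartitionCount_eq_boundedFubini,
          card_sdiff_of_subset (mem_powerset.1 hT)]
    _ = _ := by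
      rw [sum_powerset_apply_card fun j => boundedFubini k j * boundedFubini k (u.card - j)]
      simp only [smul_eq_mul]

theorem boundedFubini_succ (k n : ℕ) :
    boundedFubini k (n + 1) = ∑ m ∈ range k, n.choose m * ∑ j ∈ range (n - m + 1),
      (n - m).choose j * (boundedFubini k j * boundedFubini k (n - m - j)) := by
  have h0 : (0 : Fin (n + 1)) ∈ univ := mem_univ 0
  have hcard : ∀ c ∈ (univ.erase (0 : Fin (n + 1))).powerset,
      (univ \ insert 0 c).card = n - c.card := by
    intro c hc
    rw [card_univ_sdiff, card_insert_of_notMem (subset_erase.1 (mem_powerset.1 hc)).2,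
      Fintype.card_fin]
    omega
  rw [boundedFubini, orderedPartitionCount_eq_sum h0, sum_powerset_filter_mem_card_le h0]
  simp only [sum_powerset_orderedPartitionCount_mul]
  rw [sum_filter, sum_congr rfl fun c hc => by rw [hcard c hc], ← sum_filter]
  rw [sum_powerset_filter_card_lt (f := fun m => ∑ j ∈ range (n - m + 1),
      (n - m).choose j * (boundedFubini k j * boundedFubini k (n - m - j)))]
  simp [card_univ]

theorem sum_Icc_choose_eq_sum_range_two (H : ℕ → ℕ) (n : ℕ) :
    (∑ i ∈ Icc 1 (n + 1), n.choose (i - 1) * H (n + 1 - i) * H (i - 1)) +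
      ∑ i ∈ Icc 1 n, (n + 1 - i) * n.choose (i - 1) * H (n + 1 - i - 1) * H (i - 1) =
    ∑ m ∈ range 2, n.choose m *
      ∑ j ∈ range (n - m + 1), (n - m).choose j * (H j * H (n - m - j)) := by
  have shift (N : ℕ) (f : ℕ → ℕ) : ∑ i ∈ Icc 1 N, f i = ∑ j ∈ range N, f (j + 1) := by
    rw [range_eq_Ico, sum_Ico_add', ← Ico_add_one_right_eq_Icc]
  rw [sum_range_succ, sum_range_one, shift, shift]
  congr 1
  · simp only [Nat.choose_zero_right, Nat.sub_zero, one_mul, Nat.add_sub_cancel,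
      Nat.add_sub_add_right]
    refine sum_congr rfl fun j _ => by ring
  · rcases n with _ | n
    · simp
    rw [Nat.choose_one_right, mul_sum]
    refine sum_congr rfl fun j hj => ?_
    simp only [Nat.add_sub_cancel, Nat.add_sub_add_right, Nat.sub_right_comm _ j 1]
    rw [mul_comm (n + 1 - j), ← Nat.choose_mul_succ_eq]
    ring

/-- The number `G n` of complete τ-exceptional sequences over `Γ_n^2` equals the
restricted Fubini number `F_{n, ≤ 2}`. -/
theorem G_eq_restrictedFubini (G : ℕ → ℕ) (hG0 : G 0 = 1)
    (hG : ∀ n : ℕ, 1 ≤ n →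
      G n = (∑ i ∈ Finset.Icc 1 n,
              Nat.choose (n - 1) (i - 1) * G (n - i) * G (i - 1)) +
            (∑ i ∈ Finset.Icc 1 (n - 1),
              (n - i) * Nat.choose (n - 1) (i - 1) * G (n - i - 1) * G (i - 1))) :
    ∀ n : ℕ, G n = restrictedFubini n := by
  intro n
  induction n using Nat.strong_induction_on with
  | _ n ih =>
    rcases n with _ | n
    · rw [hG0, restrictedFubini_eq_boundedFubini, boundedFubini_zero]
    · rw [hG (n + 1) n.succ_pos, Nat.add_sub_cancel, sum_Icc_choose_eq_sum_range_two,
        restrictedFubini_eq_boundedFubini, boundedFubini_succ]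
      refine sum_congr rfl fun m _ => congrArg _ <| sum_congr rfl fun j hj => ?_
      have hjn := mem_range.1 hj
      rw [ih j (by omega), ih (n - m - j) (by omega), restrictedFubini_eq_boundedFubini,
        restrictedFubini_eq_boundedFubini]
end

section
/- For every natural number n ≥ 1, (L n : ℝ) = (n! / √3) · ( (√3 − 1)^(−n) − (−√3 − 1)^(−n) ) + (n! / √3) · ( (√3 − 1)^(−n+1) − (−√3 − 1)^(−n+1) ), where the powers are integer powers (zpow) of nonzero real numbers. -/
/-!
Let `α, β = (1 ± √3) / 2` be the roots of `x ^ 2 = x + 1 / 2` and `U m = (α ^ m - β ^ m) / √3`.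
Divided by `(n - 1)!`, the recurrence for `G` says that its exponential generating function `g`
solves `g' = (1 + X) * g ^ 2` with `g 0 = 1`, which determines `g` coefficient by coefficient.
The ordinary generating function `u = ∑ U (m + 1) * X ^ m = 1 / (1 - X - X ^ 2 / 2)` solves the
same equation, hence `G m = m! * U (m + 1)`. The formula for `L` follows because
`(√3 - 1)⁻¹ = α` and `(-√3 - 1)⁻¹ = β`.
-/

open Finset PowerSeries Nat

lemma sum_range_eq_sum_Icc_one {M : Type*} [AddCommMonoid M] (f : ℕ → M) (n : ℕ) :
    ∑ j ∈ range n, f (j + 1) = ∑ i ∈ Icc 1 n, f i := by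
  rw [range_eq_Ico, sum_Ico_add']
  rfl

namespace TauExceptional

noncomputable def α : ℝ := (1 + √3) / 2

noncomputable def β : ℝ := (1 - √3) / 2

noncomputable def U (m : ℕ) : ℝ := (α ^ m - β ^ m) / √3

lemma sq_sqrt_three : √3 ^ 2 = 3 := Real.sq_sqrt (by norm_num)

lemma α_sub_β : α - β = √3 := by unfold α β; ring

lemma α_sq : α ^ 2 = α + 1 / 2 := by
  unfold α; linear_combination sq_sqrt_three / 4

lemma β_sq : β ^ 2 = β + 1 / 2 := by
  unfold β; linear_combination sq_sqrt_three / 4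

lemma α_inv : α⁻¹ = √3 - 1 :=
  inv_eq_of_mul_eq_one_right <| by
    unfold α; linear_combination sq_sqrt_three / 2

lemma β_inv : β⁻¹ = -√3 - 1 :=
  inv_eq_of_mul_eq_one_right <| by
    unfold β; linear_combination sq_sqrt_three / 2

@[simp] lemma U_zero : U 0 = 0 := by simp [U]

@[simp] lemma U_one : U 1 = 1 := by
  rw [U, pow_one, pow_one, α_sub_β, div_self (by positivity)]

lemma U_add_two (m : ℕ) : U (m + 2) = U (m + 1) + U m / 2 := by
  simp only [U, pow_add, α_sq, β_sq]; ring

noncomputable def uSeries : ℝ⟦X⟧ := PowerSeries.mk fun m ↦ U (m + 1)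

lemma uSeries_mul : uSeries * (1 - X - C 2⁻¹ * X ^ 2) = 1 := by
  ext (_ | _ | m)
  · simp [uSeries]
  · simp [uSeries, mul_sub, coeff_one, ← mul_assoc, coeff_mul_X_pow', U_add_two]
  · simp only [uSeries, mul_sub, mul_one, ← mul_assoc, map_sub, coeff_mk, coeff_succ_mul_X,
      coeff_mul_X_pow', coeff_mul_C, coeff_one, U_add_two, Nat.reduceSubDiff,
      add_sub_cancel_left, le_add_iff_nonneg_left, zero_le, if_true, Nat.add_eq_zero_iff,
      one_ne_zero, and_false, if_false]
    ring

lemma derivative_uSeries : d⁄dX ℝ uSeries = (1 + X) * uSeries ^ 2 := by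
  have hq : d⁄dX ℝ (1 - X - C 2⁻¹ * X ^ 2) = -(1 + X) := by
    have hC : C (2⁻¹ : ℝ) * 2 = 1 := by rw [← map_ofNat C 2, ← map_mul]; norm_num
    simp only [map_sub, Derivation.map_one_eq_zero, derivative_X, Derivation.leibniz,
      Derivation.leibniz_pow, derivative_C, smul_eq_mul, nsmul_eq_mul]
    linear_combination -X * hC
  -- differentiate `u * q = 1` and multiply by `u = q⁻¹`
  have h := congrArg (d⁄dX ℝ) uSeries_mul
  rw [Derivation.leibniz, hq, smul_eq_mul, smul_eq_mul, Derivation.map_one_eq_zero] at h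
  linear_combination (-(d⁄dX ℝ uSeries)) * uSeries_mul + uSeries * h

lemma succ_mul_U_add_two (m : ℕ) :
    (m + 1) * U (m + 2) = ∑ j ∈ range (m + 1), U (j + 1) * U (m - j + 1) +
      ∑ j ∈ range m, U (j + 1) * U (m - j) := by
  cases m with
  | zero => simp [U_add_two 0]
  | succ m =>
    have h := congrArg (coeff (m + 1)) derivative_uSeries
    rw [coeff_derivative, add_mul, one_mul, map_add, pow_two] at h
    rw [coeff_succ_X_mul, coeff_mul, coeff_mul, Nat.sum_antidiagonal_eq_sum_range_succ_mk,
      Nat.sum_antidiagonal_eq_sum_range_succ_mk] at h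
    simp only [uSeries, coeff_mk] at h
    rw [mul_comm, h]
    congr 1
    refine sum_congr rfl fun j hj ↦ ?_
    rw [show m - j + 1 = m + 1 - j by grind]

section

variable (G : ℕ → ℕ) (hG0 : G 0 = 1)
    (hG : ∀ n : ℕ, 1 ≤ n →
      G n = (∑ i ∈ Finset.Icc 1 n,
              Nat.choose (n - 1) (i - 1) * G (n - i) * G (i - 1)) +
            (∑ i ∈ Finset.Icc 1 (n - 1),
              (n - i) * Nat.choose (n - 1) (i - 1) * G (n - i - 1) * G (i - 1)))
include hG

lemma G_succ_eq_sum_range (m : ℕ) :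
    G (m + 1) = ∑ j ∈ range (m + 1), m.choose j * G (m - j) * G j +
      ∑ j ∈ range m, (m - j) * m.choose j * G (m - j - 1) * G j := by
  rw [hG (m + 1) m.succ_pos, ← sum_range_eq_sum_Icc_one, ← sum_range_eq_sum_Icc_one]
  simp only [Nat.add_sub_cancel, Nat.add_sub_add_right]

include hG0

theorem G_eq_factorial_mul_U (m : ℕ) : (G m : ℝ) = m ! * U (m + 1) := by
  induction m using Nat.strong_induction_on with
  | _ m ih =>
  cases m with
  | zero => simp [hG0]
  | succ m =>
    have hterm₁ : ∀ j ∈ range (m + 1), ((m.choose j * G (m - j) * G j : ℕ) : ℝ) =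
        m ! * (U (j + 1) * U (m - j + 1)) := by
      intro j hj
      have hj : j ≤ m := Nat.lt_succ_iff.mp (mem_range.mp hj)
      rw [← Nat.choose_mul_factorial_mul_factorial hj]
      push_cast
      rw [ih (m - j) (by omega), ih j (by omega)]
      ring
    have hterm₂ : ∀ j ∈ range m, (((m - j) * m.choose j * G (m - j - 1) * G j : ℕ) : ℝ) =
        m ! * (U (j + 1) * U (m - j)) := by
      intro j hj
      have hj : j < m := mem_range.mp hj
      rw [← Nat.choose_mul_factorial_mul_factorial hj.le,
        ← Nat.mul_factorial_pred (Nat.sub_ne_zero_of_lt hj)]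
      push_cast
      rw [ih (m - j - 1) (by omega), ih j (by omega), Nat.sub_add_cancel (Nat.sub_pos_of_lt hj)]
      ring
    rw [G_succ_eq_sum_range G hG, Nat.cast_add, Nat.cast_sum, Nat.cast_sum, sum_congr rfl hterm₁,
      sum_congr rfl hterm₂, ← mul_sum, ← mul_sum, ← mul_add, ← succ_mul_U_add_two,
      Nat.factorial_succ]
    push_cast
    ring

theorem cast_L_succ (L : ℕ → ℕ)
    (hL : ∀ n : ℕ, 1 ≤ n → L n = n * G (n - 1) + n * (n - 1) * G (n - 2)) (m : ℕ) :
    (L (m + 1) : ℝ) = (m + 1)! * (U (m + 1) + U m) := by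
  rw [hL (m + 1) m.succ_pos, Nat.add_sub_cancel]
  cases m with
  | zero => simp [hG0]
  | succ k =>
    push_cast
    rw [G_eq_factorial_mul_U G hG0 hG, G_eq_factorial_mul_U G hG0 hG]
    push_cast [Nat.factorial_succ]
    ring

end

end TauExceptional

theorem L_closed_formula_general (G : ℕ → ℕ) (hG0 : G 0 = 1)
    (hG : ∀ n : ℕ, 1 ≤ n →
      G n = (∑ i ∈ Finset.Icc 1 n,
              Nat.choose (n - 1) (i - 1) * G (n - i) * G (i - 1)) +
            (∑ i ∈ Finset.Icc 1 (n - 1),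
              (n - i) * Nat.choose (n - 1) (i - 1) * G (n - i - 1) * G (i - 1)))
    (L : ℕ → ℕ)
    (hL : ∀ n : ℕ, 1 ≤ n →
      L n = n * G (n - 1) + n * (n - 1) * G (n - 2)) :
    ∀ n : ℕ, 1 ≤ n → (L n : ℝ) =
      (Nat.factorial n : ℝ) / Real.sqrt 3 *
        ((Real.sqrt 3 - 1) ^ (-(n : ℤ)) - (-Real.sqrt 3 - 1) ^ (-(n : ℤ))) +
      (Nat.factorial n : ℝ) / Real.sqrt 3 *
        ((Real.sqrt 3 - 1) ^ (-(n : ℤ) + 1) - (-Real.sqrt 3 - 1) ^ (-(n : ℤ) + 1)) := by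
  intro n hn
  obtain ⟨m, rfl⟩ := Nat.exists_eq_add_of_le' hn
  have hexp : -(-((m + 1 : ℕ) : ℤ) + 1) = m := by push_cast; ring
  rw [TauExceptional.cast_L_succ G hG0 hG L hL, ← TauExceptional.α_inv, ← TauExceptional.β_inv]
  simp only [inv_zpow', neg_neg, hexp, zpow_natCast, TauExceptional.U]
  ring

/-- Closed formula for the number `L n` of complete τ-exceptional sequences over
`Λ_n^2`: `L n = (n!/√3) * ((√3-1)^(-n) - (-√3-1)^(-n))
              + (n!/√3) * ((√3-1)^(-n+1) - (-√3-1)^(-n+1))` for `n ≥ 1`. -/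
theorem L_closed_formula (G : ℕ → ℕ) (hG0 : G 0 = 1)
    (hG : ∀ n : ℕ, 1 ≤ n →
      G n = (∑ i ∈ Finset.Icc 1 n,
              Nat.choose (n - 1) (i - 1) * G (n - i) * G (i - 1)) +
            (∑ i ∈ Finset.Icc 1 (n - 1),
              (n - i) * Nat.choose (n - 1) (i - 1) * G (n - i - 1) * G (i - 1)))
    (L : ℕ → ℕ) (hL0 : L 0 = 0)
    (hL : ∀ n : ℕ, 1 ≤ n →
      L n = n * G (n - 1) + n * (n - 1) * G (n - 2)) :
    ∀ n : ℕ, 1 ≤ n → (L n : ℝ) =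
      (Nat.factorial n : ℝ) / Real.sqrt 3 *
        ((Real.sqrt 3 - 1) ^ (-(n : ℤ)) - (-Real.sqrt 3 - 1) ^ (-(n : ℤ))) +
      (Nat.factorial n : ℝ) / Real.sqrt 3 *
        ((Real.sqrt 3 - 1) ^ (-(n : ℤ) + 1) - (-Real.sqrt 3 - 1) ^ (-(n : ℤ) + 1)) :=
  L_closed_formula_general G hG0 hG L hL
end

section
/- Let H : ℕ → ℕ satisfy H 0 = 1 and, for every n ≥ 1, H n = n · Σ_{i=1}^{n} C(n−1, i−1) · i^(i−2) · H(n−i), where i^(i−2) uses truncated natural-number subtraction in the exponent (so the i = 1 term has i^(i−2) = 1^0 = 1, consistent with the intended value 1^(−1) = 1). Then H n = nⁿ for every n ≥ 1. -/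
/-!
Since `0 ^ 0 = 1 = H 0`, strong induction reduces the claim to
`∑_{i=1}^n C(n-1, i-1) i^(i-2) (n-i)^(n-i) = n^(n-1)`, which is the case `x = 1`, `z = -1`,
`y = n - 1` of Abel's identity
`∑_k C(n,k) x (x - k z)^(k-1) (y + k z)^(n-k) = (x + y)^n`.
Viewed as polynomials in `y`, the derivative of both sides of Abel's identity is `n` times the
corresponding side for `n - 1`, and at `y = -x` the left side is `x` times an `n`-th finite
difference of a polynomial of degree `n - 1`, hence vanishes like the right side.
-/

open Finset Polynomial

section Abel

variable {R : Type*} [CommRing R]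

theorem sum_range_alternating_choose_mul_eval_eq_zero {P : R[X]} {n : ℕ} (hP : P.natDegree < n) :
    ∑ k ∈ range (n + 1), (-1) ^ (n - k) * (n.choose k : R) * P.eval (k : R) = 0 := by
  have h := congr_fun (fwdDiff_iter_eq_zero_of_degree_lt hP) 0
  rw [fwdDiff_iter_eq_sum_shift] at h
  simpa [zsmul_eq_mul] using h

noncomputable def binomialShiftPoly (c : ℕ → R) (z : R) (n : ℕ) : R[X] :=
  ∑ k ∈ range (n + 1), C (n.choose k * c k) * (X + C (k * z)) ^ (n - k)

theorem derivative_binomialShiftPoly (c : ℕ → R) (z : R) (n : ℕ) :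
    derivative (binomialShiftPoly c z (n + 1)) = C ((n : R) + 1) * binomialShiftPoly c z n := by
  rw [binomialShiftPoly, binomialShiftPoly, derivative_sum, sum_range_succ, mul_sum]
  have hchoose (k : ℕ) :
      (((n + 1).choose k * (n + 1 - k) : ℕ) : R) = ((n : R) + 1) * n.choose k := by
    rw [← Nat.choose_mul_succ_eq]; push_cast; ring
  simp only [Nat.sub_self, pow_zero, mul_one, derivative_C, add_zero, derivative_mul, zero_mul,
    zero_add, derivative_X_add_C_pow]
  refine sum_congr rfl fun k _ => ?_
  rw [Nat.sub_right_comm, Nat.add_sub_cancel, ← mul_assoc, ← mul_assoc, ← C_mul, ← C_mul,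
    mul_right_comm, ← Nat.cast_mul, hchoose, mul_assoc]

/-- `x (x - k z)^(k-1)`, with the value `x * x⁻¹ = 1` at `k = 0`. -/
def abelCoeff (x z : R) : ℕ → R
  | 0 => 1
  | k + 1 => x * (x - (k + 1) * z) ^ k

theorem abelCoeff_mul_sub_pow (x z : R) {n k : ℕ} (hn : n ≠ 0) (hk : k ≤ n) :
    abelCoeff x z k * (k * z - x) ^ (n - k) = x * ((-1) ^ (n - k) * (x - k * z) ^ (n - 1)) := by
  cases k with
  | zero =>
    obtain ⟨m, rfl⟩ := Nat.exists_eq_add_one_of_ne_zero hn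
    simp only [abelCoeff, Nat.cast_zero, zero_mul, zero_sub, sub_zero, Nat.sub_zero,
      Nat.add_sub_cancel, one_mul]
    ring
  | succ k =>
    rw [abelCoeff, show n - 1 = k + (n - (k + 1)) by omega, pow_add,
      show ((k + 1 : ℕ) : R) * z - x = -(x - (k + 1 : ℕ) * z) by ring, neg_pow]
    push_cast
    ring

theorem eval_neg_binomialShiftPoly_abelCoeff (x z : R) {n : ℕ} (hn : n ≠ 0) :
    (binomialShiftPoly (abelCoeff x z) z n).eval (-x) = 0 := by
  have hdeg : ((C x - C z * X) ^ (n - 1)).natDegree < n :=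
    (natDegree_pow_le_of_le (m := 1) _ (by compute_degree)).trans_lt (by omega)
  have h := sum_range_alternating_choose_mul_eval_eq_zero hdeg
  calc (binomialShiftPoly (abelCoeff x z) z n).eval (-x)
      = ∑ k ∈ range (n + 1), x * ((-1) ^ (n - k) * (n.choose k : R) *
          ((C x - C z * X) ^ (n - 1)).eval (k : R)) := by
        simp only [binomialShiftPoly, eval_finsetSum, eval_mul, eval_C, eval_pow, eval_add, eval_X,
          eval_sub]
        refine sum_congr rfl fun k hk => ?_
        rw [neg_add_eq_sub, mul_assoc,
          abelCoeff_mul_sub_pow x z hn (Nat.lt_succ_iff.mp (mem_range.mp hk))]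
        ring
    _ = 0 := by rw [← mul_sum, h, mul_zero]

theorem binomialShiftPoly_abelCoeff [IsAddTorsionFree R] (x z : R) (n : ℕ) :
    binomialShiftPoly (abelCoeff x z) z n = (X + C x) ^ n := by
  induction n with
  | zero => simp [binomialShiftPoly, abelCoeff]
  | succ n ih =>
    set D := binomialShiftPoly (abelCoeff x z) z (n + 1) - (X + C x) ^ (n + 1)
    have hD : derivative D = 0 := by
      rw [derivative_sub, derivative_binomialShiftPoly, ih, derivative_X_add_C_pow]
      push_cast
      ring
    have hDx : D.eval (-x) = 0 := by
      simp [D, eval_neg_binomialShiftPoly_abelCoeff x z n.succ_ne_zero]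
    have hD_const : D = C (D.eval (-x)) := by rw [eq_C_of_derivative_eq_zero hD, eval_C]
    rwa [hDx, C_0, sub_eq_zero] at hD_const

theorem abelCoeff_one_neg_one (k : ℕ) :
    abelCoeff (1 : R) (-1) k = ((k + 1 : ℕ) : R) ^ (k - 1) := by
  cases k with
  | zero => simp [abelCoeff]
  | succ k => rw [abelCoeff, Nat.add_sub_cancel]; push_cast; ring

end Abel

theorem sum_range_choose_mul_succ_pow_mul_pow (m : ℕ) :
    ∑ k ∈ range (m + 1), m.choose k * (k + 1) ^ (k - 1) * (m - k) ^ (m - k) = (m + 1) ^ m := by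
  have h := congrArg (eval (m : ℤ)) (binomialShiftPoly_abelCoeff (1 : ℤ) (-1) m)
  simp only [binomialShiftPoly, eval_finsetSum, eval_mul, eval_C, eval_pow, eval_add, eval_X,
    abelCoeff_one_neg_one] at h
  apply Nat.cast_injective (R := ℤ)
  push_cast at h ⊢
  rw [← h]
  refine sum_congr rfl fun k hk => ?_
  rw [Nat.cast_sub (Nat.lt_succ_iff.mp (mem_range.mp hk))]
  ring

theorem sum_Icc_choose_mul_pow_mul_pow {n : ℕ} (hn : 1 ≤ n) :
    ∑ i ∈ Icc 1 n, (n - 1).choose (i - 1) * i ^ (i - 2) * (n - i) ^ (n - i) = n ^ (n - 1) := by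
  obtain ⟨m, rfl⟩ := Nat.exists_eq_add_of_le' hn
  rw [← Ico_add_one_right_eq_Icc, show Ico 1 (m + 1 + 1) = Ico (0 + 1) (m + 1 + 1) from rfl,
    ← sum_Ico_add', ← range_eq_Ico]
  simpa using sum_range_choose_mul_succ_pow_mul_pow m

/-- The number `H n` of complete τ-exceptional sequences over the self-injective
Nakayama algebra `Λ_n^n`, determined by the recurrence
`H n = n * Σ_{i=1}^n C(n-1, i-1) * i^(i-2) * H (n-i)` with `H 0 = 1`,
equals `n ^ n` for every `n ≥ 1`. -/
theorem H_eq_pow (H : ℕ → ℕ) (hH0 : H 0 = 1)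
    (hH : ∀ n : ℕ, 1 ≤ n →
      H n = n * ∑ i ∈ Finset.Icc 1 n,
        Nat.choose (n - 1) (i - 1) * i ^ (i - 2) * H (n - i)) :
    ∀ n : ℕ, 1 ≤ n → H n = n ^ n := by
  suffices h : ∀ n, H n = n ^ n from fun n _ => h n
  intro n
  induction n using Nat.strong_induction_on with
  | _ n ih =>
    rcases Nat.eq_zero_or_pos n with rfl | hn
    · simpa using hH0
    calc H n = n * ∑ i ∈ Icc 1 n, (n - 1).choose (i - 1) * i ^ (i - 2) * (n - i) ^ (n - i) := by
          rw [hH n hn]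
          refine congrArg (n * ·) (sum_congr rfl fun i hi => ?_)
          rw [ih (n - i) (by have := (mem_Icc.mp hi).1; omega)]
      _ = n ^ n := by rw [sum_Icc_choose_mul_pow_mul_pow hn, ← pow_succ', Nat.sub_add_cancel hn]
end

section
/- In the ring of formal power series ℚ⟦X⟧, one has ( Σ_{n≥0} (nⁿ / n!)·Xⁿ ) · ( 1 − X · Σ_{n≥0} ((n+1)^(n−1) / n!)·Xⁿ ) = 1, where (n+1)^(n−1) uses truncated natural-number subtraction in the exponent (so the n = 0 coefficient is 1^0 = 1, consistent with the intended value 1^(−1) = 1). Equivalently, writing h(x) = Σ nⁿ xⁿ/n! and g(x) = Σ (n+1)^(n−1) xⁿ/n!, one has h·(1 − x·g) = 1. -/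
/-!
Comparing coefficients of `x^(m+1)` in `h = 1 + x * h * g` reduces the relation to Abel's identity
`n^n = ∑_{k=1}^n C(n,k) k^(k-1) (n-k)^(n-k)` for `n = m + 1`. This is the value at `z = n` of
the polynomial identity `∑_{k=1}^n C(n,k) k^(k-1) (z-k)^(n-k) = n z^(n-1)`, proved by induction on
`n`: both sides have the same derivative by the inductive hypothesis, and they agree at `z = 0`,
where the left side is an `n`-th finite difference of the polynomial `k ↦ k^(n-1)` (up to sign).
-/

open Finset Polynomial
open scoped Nat

section Abel

variable {R : Type*} [CommRing R]

theorem sum_range_neg_one_pow_mul_choose_mul_pow_eq_zero {n j : ℕ} (h : j < n) :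
    ∑ k ∈ range (n + 1), (-1 : R) ^ (n - k) * n.choose k * (k : R) ^ j = 0 := by
  have := congrFun (fwdDiff_iter_pow_eq_zero_of_lt (R := R) h) 0
  rw [fwdDiff_iter_eq_sum_shift] at this
  simpa [zsmul_eq_mul] using this

theorem sum_antidiagonal_choose_mul_neg_one_pow_mul_succ_pow (m : ℕ) :
    ∑ p ∈ antidiagonal (m + 1),
      ((m + 2).choose p.1 : R) * (-1) ^ p.1 * ((p.2 : R) + 1) ^ (m + 1) = 0 := by
  have h := sum_range_neg_one_pow_mul_choose_mul_pow_eq_zero (R := R) (Nat.lt_succ_self (m + 1))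
  rw [sum_range_succ'] at h
  simp only [Nat.cast_zero, zero_pow (Nat.succ_ne_zero _), mul_zero, add_zero] at h
  rw [← Nat.sum_antidiagonal_swap, Nat.sum_antidiagonal_eq_sum_range_succ_mk, ← h]
  refine sum_congr rfl fun k hk => ?_
  have hk : k ≤ m + 1 := Nat.lt_succ_iff.mp (mem_range.mp hk)
  rw [Prod.swap, show m + 1 - k = m + 2 - (k + 1) by omega, Nat.choose_symm (by omega)]
  push_cast
  ring

theorem Polynomial.eq_of_derivative_eq_of_eval_zero_eq [IsAddTorsionFree R] {p q : R[X]}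
    (hd : derivative p = derivative q) (h0 : p.eval 0 = q.eval 0) : p = q := by
  have h := eq_C_of_derivative_eq_zero (p := p - q) (by rw [derivative_sub, hd, sub_self])
  rwa [coeff_zero_eq_eval_zero, eval_sub, h0, sub_self, C_0, sub_eq_zero] at h

/-- The sum is indexed by `(n - k, k - 1)` with `n = m + 1`, so that no `k ^ (k - 1)` at `k = 0`
(which truncated subtraction would make `1`) enters. -/
theorem sum_antidiagonal_choose_mul_succ_pow_mul_X_sub_pow [IsAddTorsionFree R] (m : ℕ) :
    ∑ p ∈ antidiagonal m,
      C ((m + 1).choose p.1 * ((p.2 : R) + 1) ^ p.2) * (X - C ((p.2 : R) + 1)) ^ p.1 =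
      C ((m : R) + 1) * X ^ m := by
  induction m with
  | zero => simp
  | succ m ih =>
    apply eq_of_derivative_eq_of_eval_zero_eq
    · rw [derivative_sum, Nat.sum_antidiagonal_succ]
      simp only [derivative_C_mul, derivative_X_sub_C_pow, derivative_X_pow]
      rw [Nat.cast_zero, C_0, zero_mul, mul_zero, zero_add, Nat.add_sub_cancel, Nat.cast_succ,
        ← ih, mul_sum]
      refine sum_congr rfl fun p _ => ?_
      rw [Nat.add_sub_cancel, ← mul_assoc, ← C_mul, ← mul_assoc, ← C_mul]
      have hchoose :
          ((m + 1 + 1).choose (p.1 + 1) : R) * (p.1 + 1) = (m + 1 + 1) * (m + 1).choose p.1 := by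
        simpa using congrArg (Nat.cast : ℕ → R) (Nat.add_one_mul_choose_eq (m + 1) p.1).symm
      push_cast
      congr 2
      linear_combination ((p.2 : R) + 1) ^ p.2 * hchoose
    · simp only [eval_finsetSum, eval_mul, eval_C, eval_pow, eval_sub, eval_X, zero_sub]
      rw [zero_pow (Nat.succ_ne_zero m), mul_zero,
        ← sum_antidiagonal_choose_mul_neg_one_pow_mul_succ_pow (R := R) m]
      refine sum_congr rfl fun p hp => ?_
      have hpow : ((p.2 : R) + 1) ^ (m + 1) = ((p.2 : R) + 1) ^ p.1 * ((p.2 : R) + 1) ^ p.2 := by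
        rw [← pow_add, mem_antidiagonal.mp hp]
      rw [hpow, neg_eq_neg_one_mul, mul_pow]
      ring

theorem sum_antidiagonal_choose_mul_pow_self_mul_succ_pow (m : ℕ) :
    ∑ p ∈ antidiagonal m, (m + 1).choose p.1 * p.1 ^ p.1 * (p.2 + 1) ^ p.2 =
      (m + 1) ^ (m + 1) := by
  have h := congrArg (eval ((m : ℤ) + 1))
    (sum_antidiagonal_choose_mul_succ_pow_mul_X_sub_pow (R := ℤ) m)
  simp only [eval_finsetSum, eval_mul, eval_C, eval_pow, eval_sub, eval_X] at h
  zify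
  rw [pow_succ', ← h]
  refine sum_congr rfl fun p hp => ?_
  have hsub : (m : ℤ) + 1 - (p.2 + 1) = p.1 := by
    rw [← mem_antidiagonal.mp hp]; push_cast; ring
  rw [hsub]
  ring

end Abel

section ExponentialGeneratingFunction

variable {K : Type*} [Field K] [CharZero K]

theorem cast_succ_pow_pred_div_factorial (j : ℕ) :
    (((j + 1) ^ (j - 1) : ℕ) : K) / j ! = (((j + 1) ^ j : ℕ) : K) / (j + 1)! := by
  rcases j with _ | j
  · simp
  rw [div_eq_div_iff (by simp [Nat.factorial_ne_zero]) (by simp [Nat.factorial_ne_zero]),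
    Nat.factorial_succ (j + 1)]
  push_cast
  ring

theorem sum_antidiagonal_cast_pow_self_div_factorial_mul (m : ℕ) :
    ∑ p ∈ antidiagonal m,
        ((p.1 ^ p.1 : ℕ) : K) / p.1 ! * ((((p.2 + 1) ^ (p.2 - 1) : ℕ) : K) / p.2 !) =
      (((m + 1) ^ (m + 1) : ℕ) : K) / (m + 1)! := by
  rw [← sum_antidiagonal_choose_mul_pow_self_mul_succ_pow, Nat.cast_sum, sum_div]
  refine sum_congr rfl fun ⟨i, j⟩ hp => ?_
  obtain rfl : i + j = m := mem_antidiagonal.mp hp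
  dsimp only
  rw [cast_succ_pow_pred_div_factorial, add_assoc, Nat.cast_mul, Nat.cast_mul,
    Nat.cast_add_choose]
  have : ((i + (j + 1))! : K) ≠ 0 := by simp [Nat.factorial_ne_zero]
  field_simp

end ExponentialGeneratingFunction

/-- Functional relation `h * (1 - x * g) = 1` between the exponential generating
function `h` of `n ^ n` (counting complete τ-exceptional sequences over `Λ_n^n`)
and the exponential generating function `g` of `(n+1)^(n-1)` (counting complete
exceptional sequences over the type `A_{n+1}` path algebra). -/
theorem egf_H_functional_relation :
    (PowerSeries.mk fun n => ((n ^ n : ℕ) : ℚ) / (Nat.factorial n : ℚ)) *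
      (1 - PowerSeries.X *
        PowerSeries.mk (fun n => (((n + 1) ^ (n - 1) : ℕ) : ℚ) / (Nat.factorial n : ℚ))) =
      1 := by
  set h := PowerSeries.mk fun n => ((n ^ n : ℕ) : ℚ) / (Nat.factorial n : ℚ)
  set g := PowerSeries.mk fun n => (((n + 1) ^ (n - 1) : ℕ) : ℚ) / (Nat.factorial n : ℚ)
  have hrel : h = 1 + PowerSeries.X * (h * g) := by
    ext (_ | m)
    · simp [h]
    · rw [map_add, PowerSeries.coeff_succ_X_mul, PowerSeries.coeff_mul, PowerSeries.coeff_one]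
      simp only [h, g, PowerSeries.coeff_mk, Nat.succ_ne_zero, if_false, zero_add]
      exact (sum_antidiagonal_cast_pow_self_div_factorial_mul m).symm
  linear_combination hrel
end

section
/- For every natural number n ≥ 3, the following identity holds in ℚ: Σ_{i=1}^{n−3} C(n−1, i−1) · (n−i+1)^(n−i−1) · i^(i−2) = 2·(n+1)^(n−2) − n^(n−2) − (n−1)^(n−2) − (3/2)·(n−1)·(n−2)^(n−3), where all exponents are natural-number exponents with truncated subtraction (so the i = 1 term has i^(i−2) = 1^0 = 1, consistent with the intended value 1^(−1) = 1). -/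
/-!
Abel's identity `∑_{i+j=n} C(n,i) (i+1)^(i-1) (y+j)^j = (y+n+1)^n` holds as a polynomial identity
in `y`: both sides `f_n` satisfy `f_{n+1}' = (n+1) f_n(y+1)`, and both vanish at `y = -(n+2)`, where
the left side is a finite difference of too high an order. At `y = 1`, symmetrising with
`(i+1) + (j+1) = n+2` gives `∑_{i+j=n} C(n,i) (i+1)^(i-1) (j+1)^(j-1) = 2 (n+2)^(n-1)`, and the
truncated sum is this one minus its last three terms, which are explicit.
-/

open Finset Polynomial

theorem sum_neg_one_pow_mul_choose_mul_add_pow_eq_zero {R : Type*} [CommRing R] {j n : ℕ}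
    (h : j < n) (y : R) :
    ∑ k ∈ range (n + 1), (-1) ^ (n - k) * n.choose k * (y + k) ^ j = 0 := by
  have := congr_fun (fwdDiff_iter_pow_eq_zero_of_lt (R := R) h) y
  rw [fwdDiff_iter_eq_sum_shift] at this
  simpa [zsmul_eq_mul] using this

theorem succ_pow_pred_mul_succ (a : ℕ) : (a + 1) ^ (a - 1) * (a + 1) = (a + 1) ^ a := by
  cases a <;> simp [pow_succ]

section AbelPolynomial

variable (R : Type*) [CommRing R]

/-- Abel's sum `∑ C(n,i) x (x+i)^(i-1) (y+j)^j` over `i + j = n` at `x = 1`, as a polynomial in `y`;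
at `i = 0` the truncated exponent is harmless because the base is `1`. -/
noncomputable def abelPoly (n : ℕ) : R[X] :=
  ∑ p ∈ antidiagonal n,
    ((n.choose p.1 * (p.1 + 1) ^ (p.1 - 1) : ℕ) : R[X]) * (X + (p.2 : R[X])) ^ p.2

variable {R}

theorem derivative_abelPoly_succ (n : ℕ) :
    derivative (abelPoly R (n + 1)) = (n + 1 : R[X]) * (abelPoly R n).comp (X + 1) := by
  unfold abelPoly
  rw [Nat.sum_antidiagonal_succ', Polynomial.sum_comp, mul_sum]
  simp only [derivative_add, derivative_sum, derivative_natCast_mul, pow_zero, mul_one,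
    derivative_natCast, zero_add]
  refine sum_congr rfl fun ⟨i, j⟩ hij => ?_
  obtain rfl : i + j = n := HasAntidiagonal.mem_antidiagonal.mp hij
  have hchoose := Nat.choose_mul_succ_eq (i + j) i
  rw [show i + j + 1 - i = j + 1 by omega] at hchoose
  simp only [derivative_pow, derivative_X, derivative_natCast, mul_comp,
    natCast_comp, pow_comp, add_comp, X_comp, add_zero, mul_one, Nat.add_sub_cancel, map_add,
    map_natCast]
  have hchoose' := congrArg (Nat.cast : ℕ → R[X]) hchoose
  push_cast at hchoose' ⊢
  linear_combination (-((i : R[X]) + 1) ^ (i - 1) * (X + ((j : R[X]) + 1)) ^ j) * hchoose'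

/-- At `y = -(n+2)` the `(i, j)` term is `(-1)^j C(n+1,i) (i+1)^n`, so the sum is an
`(n+1)`-st finite difference of a polynomial of degree `n`. -/
theorem abelPoly_succ_isRoot (n : ℕ) : (abelPoly R (n + 1)).IsRoot (-(n + 2 : R)) := by
  have hterm : ∀ p ∈ antidiagonal (n + 1),
      eval (-(n + 2 : R))
        ((((n + 1).choose p.1 * (p.1 + 1) ^ (p.1 - 1) : ℕ) : R[X]) * (X + (p.2 : R[X])) ^ p.2)
        = (-1) ^ (n + 1 - p.1) * (n + 1).choose p.1 * ((1 : R) + p.1) ^ n := by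
    rintro ⟨i, j⟩ hp
    rw [HasAntidiagonal.mem_antidiagonal] at hp
    obtain rfl : j = n + 1 - i := by omega
    dsimp only
    have hbase : -((n : R) + 2) + ((n + 1 - i : ℕ) : R) = -1 * (1 + i) := by
      rw [Nat.cast_sub (by omega)]; push_cast; ring
    have hpow : ((i : R) + 1) ^ (i - 1) * (1 + i) ^ (n + 1 - i) = (1 + i) ^ n := by
      rcases i with _ | i
      · simp
      · rw [add_comm (1 : R), ← pow_add]; congr 1; omega
    simp only [eval_mul, eval_natCast, eval_pow, eval_add, eval_X, hbase, mul_pow]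
    push_cast
    linear_combination ((-1) ^ (n + 1 - i) * ((n + 1).choose i : R)) * hpow
  unfold abelPoly
  rw [IsRoot.def, eval_finsetSum, sum_congr rfl hterm, Nat.sum_antidiagonal_eq_sum_range_succ_mk]
  exact sum_neg_one_pow_mul_choose_mul_add_pow_eq_zero (Nat.lt_succ_self n) 1

theorem abelPoly_eq [IsAddTorsionFree R] (n : ℕ) : abelPoly R n = (X + (n + 1 : R[X])) ^ n := by
  induction n with
  | zero => simp [abelPoly]
  | succ n ih =>
    set q : R[X] := (X + ((n + 1 : ℕ) + 1 : R[X])) ^ (n + 1)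
    have hderiv : derivative (abelPoly R (n + 1) - q) = 0 := by
      rw [derivative_sub, derivative_abelPoly_succ, ih]
      simp only [q, derivative_pow, derivative_X, derivative_natCast, derivative_one,
        add_zero, mul_one, pow_comp, add_comp, X_comp, natCast_comp, one_comp, Nat.add_sub_cancel,
        map_add, map_natCast]
      push_cast
      ring
    have heval : (abelPoly R (n + 1) - q).eval (-(n + 2 : R)) = 0 := by
      simp only [eval_sub, (abelPoly_succ_isRoot n).eq_zero, q, eval_pow, eval_add, eval_X,
        eval_natCast, eval_one]
      push_cast
      ring
    rw [eq_C_of_derivative_eq_zero hderiv, eval_C] at heval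
    rw [← sub_eq_zero, eq_C_of_derivative_eq_zero hderiv, heval, map_zero]

end AbelPolynomial

theorem sum_antidiagonal_choose_mul_succ_pow_pred_mul_succ_pow (n : ℕ) :
    ∑ p ∈ antidiagonal n, n.choose p.1 * (p.1 + 1) ^ (p.1 - 1) * (p.2 + 1) ^ p.2 = (n + 2) ^ n := by
  have h := congrArg (eval (1 : ℤ)) (abelPoly_eq (R := ℤ) n)
  simp only [abelPoly, eval_finsetSum, eval_mul, eval_natCast, eval_pow, eval_add, eval_X,
    eval_one] at h
  zify
  rw [show (n + 2 : ℤ) = 1 + (n + 1) by ring, ← h]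
  exact sum_congr rfl fun p _ => by push_cast; ring

theorem mul_sum_antidiagonal_choose_mul_succ_pow_pred_mul_succ_pow_pred (n : ℕ) :
    (n + 2) * ∑ p ∈ antidiagonal n, n.choose p.1 * (p.1 + 1) ^ (p.1 - 1) * (p.2 + 1) ^ (p.2 - 1)
      = 2 * (n + 2) ^ n := by
  have habel := sum_antidiagonal_choose_mul_succ_pow_pred_mul_succ_pow n
  have hswap : ∑ p ∈ antidiagonal n, n.choose p.1 * (p.1 + 1) ^ p.1 * (p.2 + 1) ^ (p.2 - 1)
      = (n + 2) ^ n := by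
    rw [← habel, ← Nat.sum_antidiagonal_swap]
    refine sum_congr rfl fun ⟨i, j⟩ hij => ?_
    obtain rfl : i + j = n := HasAntidiagonal.mem_antidiagonal.mp hij
    simp only [Prod.swap, ← Nat.choose_symm_add]
    ring
  rw [mul_sum, two_mul]
  nth_rw 1 [← hswap]
  rw [← habel, ← sum_add_distrib]
  refine sum_congr rfl fun ⟨i, j⟩ hij => ?_
  obtain rfl : i + j = n := HasAntidiagonal.mem_antidiagonal.mp hij
  dsimp only
  rw [← succ_pow_pred_mul_succ i, ← succ_pow_pred_mul_succ j]
  ring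

def abelTerm (m k : ℕ) : ℕ := m.choose k * (k + 1) ^ (k - 1) * (m - k + 1) ^ (m - k - 1)

theorem sum_range_abelTerm {m : ℕ} (hm : 1 ≤ m) :
    ∑ k ∈ range (m + 1), abelTerm m k = 2 * (m + 2) ^ (m - 1) := by
  have h := mul_sum_antidiagonal_choose_mul_succ_pow_pred_mul_succ_pow_pred m
  rw [Nat.sum_antidiagonal_eq_sum_range_succ_mk] at h
  refine Nat.eq_of_mul_eq_mul_left (show 0 < m + 2 by omega) (h.trans ?_)
  rw [mul_left_comm, ← pow_succ', Nat.sub_add_cancel hm]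

theorem abelTerm_self (m : ℕ) : abelTerm m m = (m + 1) ^ (m - 1) := by
  simp [abelTerm]

theorem abelTerm_succ_self (m : ℕ) : abelTerm (m + 1) m = (m + 1) ^ m := by
  simp [abelTerm, Nat.choose_succ_self_right, show m + 1 - m = 1 by omega,
    ← succ_pow_pred_mul_succ m, mul_comm]

theorem two_mul_abelTerm_add_two_self (m : ℕ) :
    2 * abelTerm (m + 2) m = 3 * ((m + 2) * (m + 1) ^ m) := by
  have hchoose : (m + 2).choose m * 2 = (m + 2) * (m + 1) := by
    rw [Nat.choose_symm_add, ← Nat.add_one_mul_choose_eq, Nat.choose_one_right]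
  calc 2 * abelTerm (m + 2) m = (m + 2).choose m * 2 * (3 * (m + 1) ^ (m - 1)) := by
        simp only [abelTerm, show m + 2 - m + 1 = 3 by omega, show m + 2 - m - 1 = 1 by omega]
        ring
    _ = 3 * ((m + 2) * (m + 1) ^ m) := by
        rw [hchoose, ← succ_pow_pred_mul_succ m]
        ring

theorem sum_Icc_eq_sum_range_abelTerm {n r : ℕ} (hr : r ≤ n) :
    ∑ i ∈ Icc 1 r, (n - 1).choose (i - 1) * (n + 1 - i) ^ (n - i - 1) * i ^ (i - 2)
      = ∑ k ∈ range r, abelTerm (n - 1) k := by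
  rw [← Ico_add_one_right_eq_Icc, sum_Ico_eq_sum_range, Nat.add_sub_cancel]
  refine sum_congr rfl fun k hk => ?_
  have hk : k < r := mem_range.mp hk
  simp only [abelTerm, show 1 + k - 1 = k by omega, show n + 1 - (1 + k) = n - 1 - k + 1 by omega,
    show n - (1 + k) - 1 = n - 1 - k - 1 by omega, show 1 + k - 2 = k - 1 by omega]
  ring

/-- The identity (eq:long in the paper): for `n ≥ 3`,
`Σ_{i=1}^{n-3} C(n-1, i-1) * (n-i+1)^(n-i-1) * i^(i-2)
  = 2*(n+1)^(n-2) - n^(n-2) - (n-1)^(n-2) - (3/2)*(n-1)*(n-2)^(n-3)` in `ℚ`. -/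
theorem abel_identity_truncated (n : ℕ) (hn : 3 ≤ n) :
    (∑ i ∈ Finset.Icc 1 (n - 3),
        ((Nat.choose (n - 1) (i - 1) * (n + 1 - i) ^ (n - i - 1) * i ^ (i - 2) : ℕ) : ℚ)) =
      2 * ((n + 1) ^ (n - 2) : ℕ) - (n ^ (n - 2) : ℕ) - ((n - 1) ^ (n - 2) : ℕ) -
        (3 / 2 : ℚ) * ((n - 1) * (n - 2) ^ (n - 3) : ℕ) := by
  rw [← Nat.cast_sum, sum_Icc_eq_sum_range_abelTerm (Nat.sub_le n 3)]
  obtain ⟨d, rfl⟩ : ∃ d, n = d + 3 := ⟨n - 3, by omega⟩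
  simp only [show d + 3 - 3 = d by omega, show d + 3 - 2 = d + 1 by omega,
    show d + 3 - 1 = d + 2 by omega]
  have hfull := sum_range_abelTerm (m := d + 2) (by omega)
  rw [sum_range_succ, sum_range_succ, sum_range_succ, abelTerm_self, abelTerm_succ_self] at hfull
  have hfullQ := congrArg (Nat.cast : ℕ → ℚ) hfull
  have hboundaryQ := congrArg (Nat.cast : ℕ → ℚ) (two_mul_abelTerm_add_two_self d)
  push_cast at hfullQ hboundaryQ ⊢
  linear_combination hfullQ - hboundaryQ / 2
end

section
/- For every natural number n ≥ 3, the following identity holds in ℚ: Σ_{i=1}^{n+1} C(n, i−1)·(n−i+2)^(n−i)·i^(i−2) + Σ_{i=1}^{n−2} C(n, i−1)·(n−i+2)^(n−i)·i^(i−2) + n·(n−1)^(n−2) = 4·(n+2)^(n−1) − (n+1)^(n−1) − n^(n−1) − (1/2)·n·(n−1)^(n−2), where all exponents are natural-number exponents with truncated subtraction (so the i = n+1 term of the first sum has (n−i+2)^(n−i) = 1^0 = 1, consistent with the intended value 1^(−1) = 1, and the i = 1 terms have i^(i−2) = 1^0 = 1). -/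
open Finset Polynomial


theorem findiff (n : ℕ) : ∀ m : ℕ, m < n → ∀ x : ℚ,
    ∑ k ∈ range (n + 1), (-1 : ℚ) ^ k * (n.choose k : ℚ) * (x + k) ^ m = 0 := by
  induction n with
  | zero => intro m hm; omega
  | succ n ih =>
    intro m hm x
    have key : ∑ k ∈ range (n + 2), (-1 : ℚ) ^ k * ((n+1).choose k : ℚ) * (x + k) ^ m
        = ∑ k ∈ range (n + 1), (-1 : ℚ) ^ k * (n.choose k : ℚ)
            * ((x + k) ^ m - (x + k + 1) ^ m) := by
      have hb : ∑ k ∈ range (n + 2), (-1 : ℚ) ^ k * (n.choose k : ℚ) * (x + k) ^ m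
          = (x + 0) ^ m + ∑ j ∈ range (n + 1),
              (-1 : ℚ) ^ (j+1) * (n.choose (j+1) : ℚ) * (x + (j + 1 : ℕ)) ^ m := by
        rw [Finset.sum_range_succ' (fun k => (-1:ℚ)^k * (n.choose k : ℚ) * (x+k)^m)]
        simp only [Nat.choose_zero_right, Nat.cast_one, Nat.cast_zero, pow_zero]
        ring
      have hbtop : ∑ k ∈ range (n + 2), (-1 : ℚ) ^ k * (n.choose k : ℚ) * (x + k) ^ m
          = ∑ k ∈ range (n + 1), (-1 : ℚ) ^ k * (n.choose k : ℚ) * (x + k) ^ m := by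
        rw [Finset.sum_range_succ, Nat.choose_succ_self]
        simp
      rw [Finset.sum_range_succ' (fun k => (-1:ℚ)^k * ((n+1).choose k : ℚ) * (x+k)^m)]
      have hpas : ∀ j ∈ range (n+1), (-1:ℚ)^(j+1) * ((n+1).choose (j+1) : ℚ)
            * (x+(j+1 : ℕ))^m
          = -((-1:ℚ)^j * (n.choose j : ℚ) * (x+(j+1 : ℕ))^m)
            + (-1:ℚ)^(j+1) * (n.choose (j+1) : ℚ) * (x+(j+1 : ℕ))^m := by
        intro j _
        rw [Nat.choose_succ_succ]
        push_cast
        ring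
      rw [Finset.sum_congr rfl hpas, Finset.sum_add_distrib]
      have h3 : ∑ j ∈ range (n+1), (-1:ℚ)^(j+1) * (n.choose (j+1) : ℚ) * (x+(j+1:ℕ))^m
          = ∑ k ∈ range (n + 1), (-1 : ℚ) ^ k * (n.choose k : ℚ) * (x + k) ^ m
            - (x + 0) ^ m := by
        have := hb.symm.trans hbtop
        linarith [this]
      rw [h3]
      have hsplit : ∀ j ∈ range (n+1), ((-1:ℚ)^j * (n.choose j : ℚ)
            * ((x + j) ^ m - (x + j + 1) ^ m))
          = (-1:ℚ)^j * (n.choose j : ℚ) * (x+j)^m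
            - (-1:ℚ)^j * (n.choose j : ℚ) * (x+(j+1:ℕ))^m := by
        intro j _; push_cast; ring
      rw [Finset.sum_congr rfl hsplit, Finset.sum_sub_distrib]
      simp only [Nat.choose_zero_right, Nat.cast_one]
      push_cast
      rw [Finset.sum_neg_distrib]
      ring
    rw [key]
    have hexp : ∀ k ∈ range (n+1), (-1:ℚ)^k * (n.choose k : ℚ)
          * ((x + k) ^ m - (x + k + 1) ^ m)
        = ∑ i ∈ range m, -((m.choose i : ℚ)
            * ((-1:ℚ)^k * (n.choose k : ℚ) * (x + k) ^ i)) := by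
      intro k _
      have hap : (x + k + 1) ^ m = ∑ i ∈ range (m+1), (x+k)^i * (m.choose i : ℚ) := by
        have := add_pow (x + (k:ℚ)) 1 m
        simpa using this
      rw [hap, Finset.sum_range_succ, Nat.choose_self, Nat.cast_one, mul_one]
      have : (-1:ℚ)^k * (n.choose k : ℚ)
            * ((x+k)^m - ((∑ i ∈ range m, (x+k)^i * (m.choose i : ℚ)) + (x+k)^m))
          = -((-1:ℚ)^k * (n.choose k : ℚ) * ∑ i ∈ range m, (x+k)^i * (m.choose i : ℚ)) := by
        ring
      rw [this, Finset.mul_sum, ← Finset.sum_neg_distrib]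
      exact Finset.sum_congr rfl fun i _ => by ring
    rw [Finset.sum_congr rfl hexp, Finset.sum_comm]
    refine Finset.sum_eq_zero fun i hi => ?_
    have h0 := ih i (by simp at hi; omega) x
    have : ∑ k ∈ range (n+1), -((m.choose i : ℚ) * ((-1:ℚ)^k * (n.choose k : ℚ) * (x+k)^i))
        = -((m.choose i : ℚ) * ∑ k ∈ range (n+1), (-1:ℚ)^k * (n.choose k : ℚ) * (x+k)^i) := by
      rw [Finset.mul_sum, ← Finset.sum_neg_distrib]
    rw [this, h0, mul_zero, neg_zero]

theorem poly_eq_of_deriv {p q : ℚ[X]} (h : derivative p = derivative q) (a : ℚ)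
    (h2 : p.eval a = q.eval a) : p = q := by
  have h3 : derivative (p - q) = 0 := by rw [derivative_sub, h, sub_self]
  have h4 := Polynomial.eq_C_of_derivative_eq_zero h3
  have h5 : (p - q).eval a = (p - q).coeff 0 := by rw [h4]; simp
  rw [Polynomial.eval_sub, h2, sub_self] at h5
  have : p - q = 0 := by rw [h4, ← h5]; simp
  linear_combination this

theorem abel_poly : ∀ (n : ℕ) (t : ℚ),
    (∑ k ∈ range (n+1), C ((n.choose k : ℚ) * ((k:ℚ)+1)^(k-1))
        * (X + C (t + n - k))^(n-k)) = (X + C (t + 1 + n))^n := by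
  intro n
  induction n with
  | zero => intro t; simp
  | succ n ih =>
    intro t
    set R : ℚ[X] := (X + C (t + 1 + (n+1 : ℕ)))^(n+1) with hR
    apply poly_eq_of_deriv (a := -(t + 1 + (n+1 : ℕ)))
    · -- derivatives agree
      rw [derivative_sum]
      have hterm : ∀ k ∈ range (n+2),
          derivative (C (((n+1).choose k : ℚ) * ((k:ℚ)+1)^(k-1))
              * (X + C (t + (n+1 : ℕ) - k))^(n+1-k))
          = C (((n+1).choose k : ℚ) * ((k:ℚ)+1)^(k-1) * (n+1-k : ℕ))
              * (X + C (t + (n+1 : ℕ) - k))^(n+1-k-1) := by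
        intro k _
        rw [derivative_C_mul, derivative_pow]
        rw [derivative_add, derivative_X, derivative_C, add_zero, mul_one]
        simp only [C_mul]
        ring
      rw [Finset.sum_congr rfl hterm]
      have hstep : ∑ k ∈ range (n+2), C (((n+1).choose k : ℚ) * ((k:ℚ)+1)^(k-1) * (n+1-k : ℕ))
              * (X + C (t + (n+1 : ℕ) - k))^(n+1-k-1)
          = C ((n+1 : ℕ) : ℚ) * ∑ k ∈ range (n+1), C ((n.choose k : ℚ) * ((k:ℚ)+1)^(k-1))
              * (X + C ((t+1) + n - k))^(n-k) := by
        rw [Finset.sum_range_succ]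
        rw [Finset.mul_sum]
        have htop : C (((n+1).choose (n+1) : ℚ) * (((n+1 : ℕ):ℚ)+1)^(n+1-1) * ((n+1-(n+1) : ℕ)))
              * (X + C (t + (n+1 : ℕ) - (n+1 : ℕ)))^(n+1-(n+1)-1) = 0 := by
          simp
        rw [htop, add_zero]
        refine Finset.sum_congr rfl fun k hk => ?_
        have hkn : k ≤ n := by simp at hk; omega
        have hcoef : (((n+1).choose k : ℚ) * ((k:ℚ)+1)^(k-1) * ((n+1-k : ℕ) : ℚ))
            = ((n+1 : ℕ) : ℚ) * ((n.choose k : ℚ) * ((k:ℚ)+1)^(k-1)) := by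
          have := Nat.choose_mul_succ_eq n k
          have hcast : ((n.choose k * (n+1) : ℕ) : ℚ) = (((n+1).choose k * (n+1-k) : ℕ) : ℚ) := by
            exact_mod_cast congrArg (Nat.cast : ℕ → ℚ) this
          push_cast at hcast ⊢
          linear_combination (-(((k:ℚ)+1)^(k-1))) * hcast
        have hconst : t + ((n+1 : ℕ) : ℚ) - k = (t+1) + n - k := by push_cast; ring
        have hexpn : n+1-k-1 = n - k := by omega
        rw [hcoef, hconst, hexpn, C_mul]
        ring
      rw [hstep, ih (t+1)]
      rw [hR, derivative_pow]
      rw [derivative_add, derivative_X, derivative_C, add_zero, mul_one,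
        Nat.add_sub_cancel]
      have hc : t + 1 + 1 + (n : ℚ) = t + 1 + ((n+1 : ℕ) : ℚ) := by push_cast; ring
      rw [hc]
    · -- values at the special point agree
      have hRval : R.eval (-(t + 1 + (n+1 : ℕ))) = 0 := by
        rw [hR]
        simp only [eval_pow, eval_add, eval_X, eval_C]
        rw [show -(t + 1 + ((n+1 : ℕ):ℚ)) + (t + 1 + ((n+1 : ℕ):ℚ)) = 0 from by ring]
        simp
      rw [hRval]
      rw [Polynomial.eval_finset_sum]
      have hterm : ∀ k ∈ range (n+2),
          (C (((n+1).choose k : ℚ) * ((k:ℚ)+1)^(k-1))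
              * (X + C (t + (n+1 : ℕ) - k))^(n+1-k)).eval (-(t + 1 + (n+1 : ℕ)))
          = (-1 : ℚ)^(n+1) * ((-1:ℚ)^k * (((n+1).choose k : ℚ)) * ((1:ℚ) + k)^n) := by
        intro k hk
        have hkn : k ≤ n + 1 := by simp at hk; omega
        simp only [eval_mul, eval_pow, eval_add, eval_C, eval_X]
        have hbase : -(t + 1 + ((n+1 : ℕ):ℚ)) + (t + ((n+1 : ℕ):ℚ) - k) = -(1 + (k:ℚ)) := by
          ring
        rw [hbase, neg_pow]
        have hpow : ((k:ℚ)+1)^(k-1) * ((1:ℚ)+k)^(n+1-k) = ((1:ℚ)+k)^n := by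
          rcases k with _ | j
          · simp
          · rw [show ((j+1 : ℕ):ℚ) + 1 = 1 + ((j+1 : ℕ):ℚ) by ring, ← pow_add]
            congr 1
            omega
        have hsign : (-1:ℚ)^(n+1-k) = (-1:ℚ)^(n+1) * (-1:ℚ)^k := by
          have h1 : (-1:ℚ)^(n+1-k) * (-1:ℚ)^k = (-1:ℚ)^(n+1) := by
            rw [← pow_add]; congr 1; omega
          have h2 : (-1:ℚ)^k * (-1:ℚ)^k = 1 := by
            rw [← pow_add, ← two_mul, pow_mul]; norm_num
          calc (-1:ℚ)^(n+1-k) = (-1:ℚ)^(n+1-k) * ((-1:ℚ)^k * (-1:ℚ)^k) := by rw [h2, mul_one]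
            _ = ((-1:ℚ)^(n+1-k) * (-1:ℚ)^k) * (-1:ℚ)^k := by ring
            _ = (-1:ℚ)^(n+1) * (-1:ℚ)^k := by rw [h1]
        rw [hsign]
        linear_combination ((-1:ℚ)^(n+1) * (-1:ℚ)^k * (((n+1).choose k : ℚ))) * hpow
      rw [Finset.sum_congr rfl hterm, ← Finset.mul_sum]
      rw [findiff (n+1) n (Nat.lt_succ_self n) 1, mul_zero]

theorem abel_val (n : ℕ) (y : ℚ) :
    ∑ k ∈ range (n+1), (n.choose k : ℚ) * ((k:ℚ)+1)^(k-1) * (y + n - k)^(n-k)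
      = (y + 1 + n)^n := by
  have h := congrArg (Polynomial.eval y) (abel_poly n 0)
  simp only [eval_finset_sum, eval_mul, eval_pow, eval_add, eval_C, eval_X] at h
  have h2 : ∀ k ∈ range (n+1),
      (n.choose k : ℚ) * ((k:ℚ)+1)^(k-1) * (y + (0 + (n:ℚ) - k))^(n-k)
      = (n.choose k : ℚ) * ((k:ℚ)+1)^(k-1) * (y + (n:ℚ) - k)^(n-k) := by
    intro k _
    rw [show y + (0 + (n:ℚ) - k) = y + (n:ℚ) - k from by ring]
  rw [Finset.sum_congr rfl h2] at h
  rw [h, show y + (0 + 1 + (n:ℚ)) = y + 1 + n from by ring]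

theorem S_val (m : ℕ) :
    ∑ k ∈ range (m+2), (((m+1).choose k : ℚ) * ((k:ℚ)+1)^(k-1)
        * ((1:ℚ) + ((m+1 : ℕ):ℚ) - k)^(m-k))
      = 2 * ((m:ℚ)+3)^m := by
  have h1 := abel_val (m+1) 1
  rw [Finset.sum_range_succ] at h1
  have h2 := abel_val m 2
  -- split each term of the truncated sum
  have hsplit : ∀ k ∈ range (m+1),
      (((m+1).choose k : ℚ) * ((k:ℚ)+1)^(k-1) * ((1:ℚ) + ((m+1 : ℕ):ℚ) - k)^(m+1-k))
      = (((m+1).choose k : ℚ) * ((k:ℚ)+1)^(k-1) * ((1:ℚ) + ((m+1 : ℕ):ℚ) - k)^(m-k))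
        + ((m+1 : ℕ):ℚ) * ((m.choose k : ℚ) * ((k:ℚ)+1)^(k-1) * ((2:ℚ) + (m:ℚ) - k)^(m-k)) := by
    intro k hk
    have hkm : k ≤ m := by simp at hk; omega
    have hO : m+1-k = (m-k)+1 := by omega
    rw [hO, pow_succ]
    have hb : (1:ℚ) + ((m+1 : ℕ):ℚ) - k = 1 + ((m+1-k : ℕ):ℚ) := by
      rw [Nat.cast_sub (by omega)]; push_cast; ring
    have hb2 : (1:ℚ) + ((m+1 : ℕ):ℚ) - k = (2:ℚ) + (m:ℚ) - k := by push_cast; ring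
    have hch : ((m+1-k : ℕ):ℚ) * (((m+1).choose k : ℕ) : ℚ)
        = ((m+1 : ℕ):ℚ) * ((m.choose k : ℕ) : ℚ) := by
      have := Nat.choose_mul_succ_eq m k
      have : ((m.choose k * (m+1) : ℕ) : ℚ) = (((m+1).choose k * (m+1-k) : ℕ) : ℚ) :=
        congrArg _ this
      push_cast at this
      push_cast
      linarith [this]
    rw [hb2]
    have hbb : ((2:ℚ) + (m:ℚ) - k) = 1 + ((m+1-k : ℕ):ℚ) := by rw [← hb2, hb]
    rw [hbb]
    linear_combination (((k:ℚ)+1)^(k-1) * (1 + ((m+1-k : ℕ):ℚ))^(m-k)) * hch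
  rw [Finset.sum_congr rfl hsplit, Finset.sum_add_distrib, ← Finset.mul_sum] at h1
  -- identify the second sum with abel_val m 2
  have h3 : ∑ k ∈ range (m+1),
      ((m.choose k : ℚ) * ((k:ℚ)+1)^(k-1) * ((2:ℚ) + (m:ℚ) - k)^(m-k)) = (2 + 1 + (m:ℚ))^m := h2
  rw [h3] at h1
  -- now extract S
  rw [Finset.sum_range_succ]
  have htop1 : (((m+1).choose (m+1) : ℚ) * (((m+1:ℕ):ℚ)+1)^(m+1-1)
      * ((1:ℚ) + ((m+1 : ℕ):ℚ) - ((m+1:ℕ):ℚ))^(m+1-(m+1)))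
      = ((m:ℚ)+2)^m := by
    rw [Nat.choose_self, show m+1-(m+1) = 0 from by omega, pow_zero, Nat.add_sub_cancel]
    push_cast; ring
  have htop2 : (((m+1).choose (m+1) : ℚ) * (((m+1:ℕ):ℚ)+1)^(m+1-1)
      * ((1:ℚ) + ((m+1 : ℕ):ℚ) - ((m+1:ℕ):ℚ))^(m-(m+1)))
      = ((m:ℚ)+2)^m := by
    rw [Nat.choose_self, show m-(m+1) = 0 from by omega, pow_zero, Nat.add_sub_cancel]
    push_cast; ring
  rw [htop2]
  rw [htop1] at h1
  have hb : (1:ℚ)+1+((m+1:ℕ):ℚ) = 2+1+(m:ℚ) := by push_cast; ring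
  rw [hb, pow_succ] at h1
  push_cast at h1 ⊢
  linear_combination h1

theorem conv (M : ℕ) :
    ∑ i ∈ Finset.Icc 1 (M+2), (((M+1).choose (i-1) * (M+3-i)^(M+1-i) * i^(i-2) : ℕ) : ℚ)
    = ∑ k ∈ range (M+2), (((M+1).choose k : ℚ) * ((k:ℚ)+1)^(k-1)
        * ((1:ℚ) + ((M+1 : ℕ):ℚ) - k)^(M-k)) := by
  rw [← Finset.Ico_add_one_right_eq_Icc, Finset.sum_Ico_eq_sum_range]
  rw [show M + 2 + 1 - 1 = M + 2 from by omega]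
  refine Finset.sum_congr rfl fun k hk => ?_
  have hkM : k ≤ M + 1 := by simp at hk; omega
  have e1 : 1 + k - 1 = k := by omega
  have e2 : M + 3 - (1 + k) = M + 2 - k := by omega
  have e3 : M + 1 - (1 + k) = M - k := by omega
  have e4 : 1 + k - 2 = k - 1 := by omega
  rw [e1, e2, e3, e4]
  have hle : k ≤ M + 2 := by omega
  push_cast [Nat.cast_sub hle]
  ring

theorem sum1_val (m : ℕ) :
    ∑ i ∈ Finset.Icc 1 (m+3+1),
        (((m+3).choose (i-1) * (m+3+2-i)^(m+3-i) * i^(i-2) : ℕ) : ℚ)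
      = 2 * ((m:ℚ)+5)^(m+2) := by
  have h1 := conv (m+2)
  have h2 := S_val (m+2)
  rw [show m+3+1 = (m+2)+2 from by omega] at *
  rw [show m+3+2 = (m+2)+3 from by omega, show m+3 = (m+2)+1 from by omega]
  rw [h1, h2]
  push_cast
  ring

theorem sum2_val (m : ℕ) :
    ∑ i ∈ Finset.Icc 1 (m+1),
        (((m+3).choose (i-1) * (m+3+2-i)^(m+3-i) * i^(i-2) : ℕ) : ℚ)
      = 2*((m:ℚ)+5)^(m+2) - ((m:ℚ)+4)^(m+2) - ((m:ℚ)+3)^(m+2)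
        - (3/2)*(((m:ℚ)+3)*((m:ℚ)+2)^(m+1)) := by
  have hfull := sum1_val m
  rw [Finset.sum_Icc_succ_top (by omega : 1 ≤ m+3+1)] at hfull
  rw [show m+3 = m+2+1 from by omega] at hfull
  rw [Finset.sum_Icc_succ_top (by omega : 1 ≤ m+2+1)] at hfull
  rw [show m+2 = m+1+1 from by omega] at hfull
  rw [Finset.sum_Icc_succ_top (by omega : 1 ≤ m+1+1)] at hfull
  simp only [show m+1+1 = m+2 from by omega, show m+2+1 = m+3 from by omega,
    show m+3+1 = m+4 from by omega, show m+3+2 = m+5 from by omega,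
    show m+2-1 = m+1 from by omega, show m+5-(m+2) = 3 from by omega,
    show m+3-(m+2) = 1 from by omega, show m+2-2 = m from by omega,
    show m+3-1 = m+2 from by omega, show m+5-(m+3) = 2 from by omega,
    show m+3-(m+3) = 0 from by omega, show m+3-2 = m+1 from by omega,
    show m+4-1 = m+3 from by omega, show m+5-(m+4) = 1 from by omega,
    show m+3-(m+4) = 0 from by omega, show m+4-2 = m+2 from by omega] at hfull
  have hc3 : (m+3).choose (m+2) = m+3 := by
    rw [show m+3 = m+2+1 from by omega]
    exact Nat.choose_succ_self_right (m+2)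
  have hc2 : 2 * ((m+3).choose (m+1)) = (m+3)*(m+2) := by
    have h := Nat.choose_symm (show 2 ≤ m+3 by omega)
    rw [show m+3-2 = m+1 from by omega] at h
    have h2 := Nat.choose_two_right (m+3)
    rw [show m+3-1 = m+2 from by omega] at h2
    have hdvd : 2 ∣ (m+3)*(m+2) := by
      have he : Even ((m+2)*(m+3)) := by
        rw [show m+3 = m+2+1 from by omega]
        exact Nat.even_mul_succ_self (m+2)
      rw [mul_comm] at he
      exact even_iff_two_dvd.mp he
    rw [h, h2]
    exact Nat.mul_div_cancel' hdvd
  simp only [hc3, Nat.choose_self, pow_zero, pow_one, mul_one, one_mul] at hfull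
  have hcast2 : (((m+3).choose (m+1) : ℕ):ℚ) * 2 = ((m:ℚ)+3)*((m:ℚ)+2) := by
    have : ((2 * ((m+3).choose (m+1)) : ℕ) : ℚ) = (((m+3)*(m+2) : ℕ) : ℚ) := by
      exact_mod_cast congrArg (Nat.cast : ℕ → ℚ) hc2
    push_cast at this
    linarith [this]
  simp only [show m+3+2 = m+5 from by omega]
  push_cast at hfull ⊢
  linear_combination hfull - (3/2)*((m:ℚ)+2)^m * hcast2

/-- The non-recursive part of the recurrence for `K (n+1)` (eq:eq2 in the paper),
where `K n` counts complete τ-exceptional sequences over `Γ_n^{n-1}`: for `n ≥ 3`,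
`Σ_{i=1}^{n+1} C(n, i-1)*(n-i+2)^(n-i)*i^(i-2)
  + Σ_{i=1}^{n-2} C(n, i-1)*(n-i+2)^(n-i)*i^(i-2) + n*(n-1)^(n-2)
  = 4*(n+2)^(n-1) - (n+1)^(n-1) - n^(n-1) - (1/2)*n*(n-1)^(n-2)` in `ℚ`. -/
theorem K_nonrecursive_part (n : ℕ) (hn : 3 ≤ n) :
    (∑ i ∈ Finset.Icc 1 (n + 1),
        ((Nat.choose n (i - 1) * (n + 2 - i) ^ (n - i) * i ^ (i - 2) : ℕ) : ℚ)) +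
      (∑ i ∈ Finset.Icc 1 (n - 2),
        ((Nat.choose n (i - 1) * (n + 2 - i) ^ (n - i) * i ^ (i - 2) : ℕ) : ℚ)) +
      ((n * (n - 1) ^ (n - 2) : ℕ) : ℚ) =
      4 * ((n + 2) ^ (n - 1) : ℕ) - ((n + 1) ^ (n - 1) : ℕ) - (n ^ (n - 1) : ℕ) -
        (1 / 2 : ℚ) * ((n * (n - 1) ^ (n - 2) : ℕ) : ℚ) := by
  obtain ⟨m, rfl⟩ : ∃ m, n = m + 3 := ⟨n - 3, by omega⟩
  have h1 := sum1_val m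
  have h2 := sum2_val m
  simp only [show m+3-2 = m+1 from by omega, show m+3-1 = m+2 from by omega,
    show m+3+2 = m+5 from by omega, show m+3+1 = m+4 from by omega] at h1 h2 ⊢
  rw [h1, h2]
  push_cast
  ring
end

section
/- For every natural number n, (F n : ℝ) = (n! / √3) · ( (√3 − 1)^(−(n+1)) − (−√3 − 1)^(−(n+1)) ), where F n is the number of ordered set partitions of an n-element set into blocks of size at most 2, and the powers are integer powers (zpow) of nonzero real numbers. -/
open Finset

variable {α β : Type*}

/-- predicate: `B` is an ordered set partition of `s` with blocks of size ≤ 2 -/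
def OSP [DecidableEq α] (s : Finset α) (B : List (Finset α)) : Prop :=
  (∀ b ∈ B, b.Nonempty ∧ b.card ≤ 2) ∧
    B.Pairwise Disjoint ∧ B.foldr (· ∪ ·) ∅ = s

lemma subset_foldr [DecidableEq α] {B : List (Finset α)} {b : Finset α} (hb : b ∈ B) :
    b ⊆ B.foldr (· ∪ ·) ∅ := by
  induction B with
  | nil => simp at hb
  | cons c B ih =>
    rcases List.mem_cons.1 hb with h | h
    · subst h; exact Finset.subset_union_left
    · exact (ih h).trans Finset.subset_union_right

lemma disjoint_foldr [DecidableEq α] {B : List (Finset α)} {b : Finset α}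
    (h : ∀ c ∈ B, Disjoint b c) : Disjoint b (B.foldr (· ∪ ·) ∅) := by
  induction B with
  | nil => simp
  | cons c B ih =>
    simp only [List.foldr_cons, Finset.disjoint_union_right]
    exact ⟨h c (by simp), ih fun c hc => h c (by simp [hc])⟩

lemma osp_length_le [DecidableEq α] {s : Finset α} {B : List (Finset α)} (h : OSP s B) :
    B.length ≤ s.card := by
  obtain ⟨h1, h2, h3⟩ := h
  subst h3
  induction B with
  | nil => simp
  | cons c B ih =>
    simp only [List.foldr_cons, List.length_cons]
    have hd : Disjoint c (B.foldr (· ∪ ·) ∅) :=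
      disjoint_foldr fun b hb => (List.pairwise_cons.1 h2).1 b hb
    rw [Finset.card_union_of_disjoint hd]
    have hc1 : 1 ≤ c.card := Finset.card_pos.2 (h1 c (by simp)).1
    have := ih (fun b hb => h1 b (by simp [hb])) (List.pairwise_cons.1 h2).2
    omega

instance ospFinite [DecidableEq α] [Fintype α] (s : Finset α) :
    Finite {B : List (Finset α) // OSP s B} := by
  have : {B : List (Finset α) | OSP s B}.Finite := by
    apply (List.finite_length_le (Finset α) s.card).subset
    intro B hB
    exact osp_length_le hB
  exact this.to_subtype

lemma foldr_map_image [DecidableEq α] [DecidableEq β] (e : α ≃ β) (B : List (Finset α)) :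
    (B.map (Finset.image e)).foldr (· ∪ ·) ∅ = (B.foldr (· ∪ ·) ∅).image e := by
  induction B with
  | nil => simp
  | cons c B ih => simp [ih, Finset.image_union]

/-- transport along an equivalence of the ambient types -/
def ospEquivOfEquiv [DecidableEq α] [DecidableEq β] [Fintype α] [Fintype β] (e : α ≃ β) :
    {B : List (Finset α) // OSP univ B} ≃ {B : List (Finset β) // OSP univ B} where
  toFun := fun p => ⟨p.1.map (Finset.image e), by
    obtain ⟨h1, h2, h3⟩ := p.2
    refine ⟨?_, ?_, ?_⟩
    · intro b hb
      obtain ⟨c, hc, rfl⟩ := List.mem_map.1 hb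
      exact ⟨(h1 c hc).1.image e, by
        rw [Finset.card_image_of_injective _ e.injective]; exact (h1 c hc).2⟩
    · rw [List.pairwise_map]
      exact h2.imp fun hd => (Finset.disjoint_image e.injective).2 hd
    · rw [foldr_map_image, h3]
      ext x
      simp [e.surjective x |>.choose_spec, (e.surjective x).choose_spec]⟩
  invFun := fun p => ⟨p.1.map (Finset.image e.symm), by
    obtain ⟨h1, h2, h3⟩ := p.2
    refine ⟨?_, ?_, ?_⟩
    · intro b hb
      obtain ⟨c, hc, rfl⟩ := List.mem_map.1 hb
      exact ⟨(h1 c hc).1.image e.symm, by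
        rw [Finset.card_image_of_injective _ e.symm.injective]; exact (h1 c hc).2⟩
    · rw [List.pairwise_map]
      exact h2.imp fun hd => (Finset.disjoint_image e.symm.injective).2 hd
    · rw [foldr_map_image, h3]
      ext x
      simp⟩
  left_inv := fun p => by
    ext1
    show (p.1.map (Finset.image e)).map (Finset.image e.symm) = p.1
    rw [List.map_map, show (Finset.image ⇑e.symm ∘ Finset.image ⇑e) = id from ?_, List.map_id]
    funext t; simp [Finset.image_image]
  right_inv := fun p => by
    ext1
    show (p.1.map (Finset.image e.symm)).map (Finset.image e) = p.1
    rw [List.map_map, show (Finset.image ⇑e ∘ Finset.image ⇑e.symm) = id from ?_, List.map_id]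
    funext t; simp [Finset.image_image]

lemma subtype_union [DecidableEq α] (p : α → Prop) [DecidablePred p] (a b : Finset α) :
    (a ∪ b).subtype p = a.subtype p ∪ b.subtype p := by
  ext x; simp [Finset.mem_subtype]

lemma foldr_map_finsetSubtype [DecidableEq α] (p : α → Prop) [DecidablePred p]
    (B : List (Finset α)) :
    (B.map (Finset.subtype p)).foldr (· ∪ ·) ∅ = (B.foldr (· ∪ ·) ∅).subtype p := by
  induction B with
  | nil => ext x; simp [Finset.mem_subtype]
  | cons c B ih => simp [ih, subtype_union]

lemma foldr_map_finsetMap [DecidableEq α] [DecidableEq β] (f : α ↪ β) (B : List (Finset α)) :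
    (B.map (Finset.map f)).foldr (· ∪ ·) ∅ = (B.foldr (· ∪ ·) ∅).map f := by
  induction B with
  | nil => simp
  | cons c B ih => simp [ih, Finset.map_union]

/-- restriction to a subtype -/
def ospSubtypeEquiv [DecidableEq α] (s : Finset α) :
    {B : List (Finset α) // OSP s B} ≃ {B : List (Finset {x // x ∈ s}) // OSP univ B} where
  toFun := fun p => ⟨p.1.map (Finset.subtype (· ∈ s)), by
    obtain ⟨h1, h2, h3⟩ := p.2
    have hsub : ∀ b ∈ p.1, b ⊆ s := fun b hb => h3 ▸ subset_foldr hb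
    refine ⟨?_, ?_, ?_⟩
    · intro b hb
      obtain ⟨c, hc, rfl⟩ := List.mem_map.1 hb
      have hcard : (c.subtype (· ∈ s)).card = c.card := by
        rw [← Finset.card_map (Function.Embedding.subtype _),
          Finset.subtype_map_of_mem (fun x hx => hsub c hc hx)]
      constructor
      · obtain ⟨x, hx⟩ := (h1 c hc).1
        exact ⟨⟨x, hsub c hc hx⟩, Finset.mem_subtype.2 hx⟩
      · rw [hcard]; exact (h1 c hc).2
    · rw [List.pairwise_map]
      refine h2.imp fun {a b} hd => ?_
      simp only [Finset.disjoint_left, Finset.mem_subtype] at hd ⊢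
      exact fun x hx => hd hx
    · rw [foldr_map_finsetSubtype, h3]
      ext x; simp [Finset.mem_subtype]⟩
  invFun := fun p => ⟨p.1.map (Finset.map (Function.Embedding.subtype _)), by
    obtain ⟨h1, h2, h3⟩ := p.2
    refine ⟨?_, ?_, ?_⟩
    · intro b hb
      obtain ⟨c, hc, rfl⟩ := List.mem_map.1 hb
      exact ⟨(h1 c hc).1.map, by rw [Finset.card_map]; exact (h1 c hc).2⟩
    · rw [List.pairwise_map]
      refine h2.imp fun {a b} hd => ?_
      simp only [Finset.disjoint_left, Finset.mem_map, Function.Embedding.coe_subtype] at hd ⊢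
      rintro x ⟨y, hy, rfl⟩ ⟨z, hz, hzy⟩
      cases Subtype.ext hzy
      exact hd hy hz
    · rw [foldr_map_finsetMap, h3]
      ext x
      simp only [Finset.mem_map, Function.Embedding.coe_subtype, Finset.mem_univ, true_and]
      constructor
      · rintro ⟨y, _, rfl⟩; exact y.2
      · intro hx; exact ⟨⟨x, hx⟩, by simp⟩⟩
  left_inv := fun p => by
    ext1
    show (p.1.map (Finset.subtype (· ∈ s))).map (Finset.map (Function.Embedding.subtype _)) = p.1
    obtain ⟨h1, h2, h3⟩ := p.2
    have hsub : ∀ b ∈ p.1, b ⊆ s := fun b hb => h3 ▸ subset_foldr hb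
    rw [List.map_map]
    conv_rhs => rw [← List.map_id p.1]
    refine List.map_congr_left fun b hb => ?_
    exact Finset.subtype_map_of_mem (fun x hx => hsub b hb hx)
  right_inv := fun p => by
    ext1
    show (p.1.map (Finset.map (Function.Embedding.subtype _))).map (Finset.subtype (· ∈ s)) = p.1
    rw [List.map_map]
    conv_rhs => rw [← List.map_id p.1]
    refine List.map_congr_left fun b _ => ?_
    show (b.map (Function.Embedding.subtype _)).subtype (· ∈ s) = b
    ext x
    simp [Finset.mem_subtype]

lemma restrictedFubini_eq (n : ℕ) :
    restrictedFubini n = Nat.card {B : List (Finset (Fin n)) // OSP univ B} := rfl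

lemma card_osp_eq [DecidableEq α] (s : Finset α) :
    Nat.card {B : List (Finset α) // OSP s B} = restrictedFubini s.card := by
  rw [restrictedFubini_eq, Nat.card_congr (ospSubtypeEquiv s)]
  exact Nat.card_congr (ospEquivOfEquiv s.equivFin)

lemma restrictedFubini_zero : restrictedFubini 0 = 1 := by
  rw [restrictedFubini_eq]
  have : Unique {B : List (Finset (Fin 0)) // OSP univ B} := by
    refine ⟨⟨⟨[], by simp, by simp, by ext x; exact x.elim0⟩⟩, ?_⟩
    rintro ⟨B, h1, h2, h3⟩
    ext1
    match B with
    | [] => rfl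
    | b :: B' =>
      obtain ⟨x, _⟩ := (h1 b (by simp)).1
      exact x.elim0
  exact Nat.card_unique

section Head
variable [DecidableEq α] (s : Finset α)

/-- attaching a first block -/
def ospCons :
    (Σ b : {b : Finset α // b ⊆ s ∧ b.Nonempty ∧ b.card ≤ 2},
      {B : List (Finset α) // OSP (s \ b.1) B}) → {B : List (Finset α) // OSP s B} :=
  fun p => ⟨p.1.1 :: p.2.1, by
    obtain ⟨⟨b, hbs, hbn, hbc⟩, ⟨B, h1, h2, h3⟩⟩ := p
    refine ⟨?_, ?_, ?_⟩
    · intro c hc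
      rcases List.mem_cons.1 hc with rfl | hc'
      · exact ⟨hbn, hbc⟩
      · exact h1 c hc'
    · rw [List.pairwise_cons]
      refine ⟨fun c hc => ?_, h2⟩
      have : c ⊆ s \ b := h3 ▸ subset_foldr hc
      exact Finset.disjoint_left.2 fun x hxb hxc => (Finset.mem_sdiff.1 (this hxc)).2 hxb
    · show b ∪ B.foldr (· ∪ ·) ∅ = s
      rw [h3, Finset.union_sdiff_of_subset hbs]⟩

lemma ospCons_bijective (hs : s.Nonempty) : Function.Bijective (ospCons s) := by
  constructor
  · rintro ⟨⟨b, hb⟩, ⟨B, hB⟩⟩ ⟨⟨b', hb'⟩, ⟨B', hB'⟩⟩ h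
    have : b :: B = b' :: B' := congrArg Subtype.val h
    obtain ⟨rfl, rfl⟩ : b = b' ∧ B = B' := by simpa using this
    rfl
  · rintro ⟨B, h1, h2, h3⟩
    match B with
    | [] => exact absurd h3.symm hs.ne_empty
    | b :: B' =>
      have hfold : b ∪ B'.foldr (· ∪ ·) ∅ = s := h3
      have hbs : b ⊆ s := hfold ▸ Finset.subset_union_left
      have hd : Disjoint b (B'.foldr (· ∪ ·) ∅) :=
        disjoint_foldr (List.pairwise_cons.1 h2).1
      have hfold' : B'.foldr (· ∪ ·) ∅ = s \ b := by
        rw [← hfold, Finset.union_sdiff_cancel_left hd]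
      refine ⟨⟨⟨b, hbs, (h1 b (by simp)).1, (h1 b (by simp)).2⟩,
        ⟨B', fun c hc => h1 c (by simp [hc]), (List.pairwise_cons.1 h2).2, hfold'⟩⟩, rfl⟩

end Head

lemma restrictedFubini_rec (n : ℕ) : restrictedFubini (n + 1) =
    (n + 1) * restrictedFubini n + (n + 1).choose 2 * restrictedFubini (n - 1) := by
  classical
  rw [restrictedFubini_eq]
  rw [Nat.card_congr (Equiv.ofBijective (ospCons (univ : Finset (Fin (n + 1))))
    (ospCons_bijective _ univ_nonempty)).symm]
  haveI : ∀ b : {b : Finset (Fin (n + 1)) // b ⊆ univ ∧ b.Nonempty ∧ b.card ≤ 2},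
      Fintype {B : List (Finset (Fin (n + 1))) // OSP (univ \ b.1) B} :=
    fun b => @Fintype.ofFinite _ (ospFinite _)
  rw [Nat.card_eq_fintype_card, Fintype.card_sigma]
  have hval : ∀ b : {b : Finset (Fin (n + 1)) // b ⊆ univ ∧ b.Nonempty ∧ b.card ≤ 2},
      Fintype.card {B : List (Finset (Fin (n + 1))) // OSP (univ \ b.1) B} =
        restrictedFubini (n + 1 - b.1.card) := by
    intro b
    rw [← Nat.card_eq_fintype_card, card_osp_eq, Finset.card_sdiff_of_subset (Finset.subset_univ _),
      Finset.card_univ, Fintype.card_fin]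
  simp_rw [hval]
  rw [← Finset.sum_subtype
    (Finset.univ.filter fun b : Finset (Fin (n + 1)) => b ⊆ univ ∧ b.Nonempty ∧ b.card ≤ 2)
    (by intro x; simp) (fun b => restrictedFubini (n + 1 - b.card))]
  have hsplit : (Finset.univ.filter
      fun b : Finset (Fin (n + 1)) => b ⊆ univ ∧ b.Nonempty ∧ b.card ≤ 2) =
      Finset.powersetCard 1 (univ : Finset (Fin (n + 1))) ∪
        Finset.powersetCard 2 (univ : Finset (Fin (n + 1))) := by
    ext b
    simp only [Finset.mem_filter, Finset.mem_union, Finset.mem_powersetCard,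
      Finset.mem_univ, true_and, Finset.subset_univ, ← Finset.card_pos]
    omega
  have hdisj : Disjoint (Finset.powersetCard 1 (univ : Finset (Fin (n + 1))))
      (Finset.powersetCard 2 (univ : Finset (Fin (n + 1)))) := by
    rw [Finset.disjoint_left]
    intro b h1 h2
    rw [Finset.mem_powersetCard] at h1 h2
    omega
  rw [hsplit, Finset.sum_union hdisj]
  have h1 : ∑ b ∈ Finset.powersetCard 1 (univ : Finset (Fin (n + 1))),
      restrictedFubini (n + 1 - b.card) = (n + 1) * restrictedFubini n := by
    rw [Finset.sum_congr rfl (fun b hb => by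
      rw [(Finset.mem_powersetCard.1 hb).2]), Finset.sum_const, Finset.card_powersetCard,
      Finset.card_univ, Fintype.card_fin, Nat.choose_one_right, smul_eq_mul]
    congr 1
  have h2 : ∑ b ∈ Finset.powersetCard 2 (univ : Finset (Fin (n + 1))),
      restrictedFubini (n + 1 - b.card) = (n + 1).choose 2 * restrictedFubini (n - 1) := by
    rw [Finset.sum_congr rfl (fun b hb => by
      rw [(Finset.mem_powersetCard.1 hb).2]), Finset.sum_const, Finset.card_powersetCard,
      Finset.card_univ, Fintype.card_fin, smul_eq_mul]
    congr 1
  rw [h1, h2]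

lemma restrictedFubini_one : restrictedFubini 1 = 1 := by
  have := restrictedFubini_rec 0
  simpa [restrictedFubini_zero] using this

lemma key_formula : ∀ n : ℕ, (restrictedFubini n : ℝ) =
    (Nat.factorial n : ℝ) / Real.sqrt 3 *
      (((Real.sqrt 3 + 1) / 2) ^ (n + 1) - ((1 - Real.sqrt 3) / 2) ^ (n + 1)) := by
  have hs : Real.sqrt 3 ^ 2 = 3 := Real.sq_sqrt (by norm_num)
  have hs0 : Real.sqrt 3 ≠ 0 := by positivity
  set s := Real.sqrt 3 with hsdef
  set a : ℝ := (s + 1) / 2 with ha_def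
  set b : ℝ := (1 - s) / 2 with hb_def
  have ha2 : a ^ 2 = a + 1 / 2 := by rw [ha_def]; field_simp; nlinarith [hs]
  have hb2 : b ^ 2 = b + 1 / 2 := by rw [hb_def]; field_simp; nlinarith [hs]
  have hab : a - b = s := by rw [ha_def, hb_def]; ring
  intro n
  induction n using Nat.strong_induction_on with
  | _ n ih =>
    match n with
    | 0 => simp [restrictedFubini_zero, hab, Nat.factorial, hs0]
    | 1 =>
      have : a ^ 2 - b ^ 2 = s := by rw [ha2, hb2]; rw [ha_def, hb_def]; ring
      simp [restrictedFubini_one, this, Nat.factorial, hs0]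
    | (m + 2) =>
      have h1 := ih (m + 1) (by omega)
      have h0 := ih m (by omega)
      rw [restrictedFubini_rec (m + 1)]
      push_cast [Nat.cast_choose_two]
      rw [h1, h0]
      have e3 : a ^ (m + 2 + 1) = a ^ (m + 1) * (a + 1 / 2) := by
        rw [← ha2]; ring
      have f3 : b ^ (m + 2 + 1) = b ^ (m + 1) * (b + 1 / 2) := by
        rw [← hb2]; ring
      have e2 : a ^ (m + 1 + 1) = a ^ (m + 1) * a := by ring
      have f2 : b ^ (m + 1 + 1) = b ^ (m + 1) * b := by ring
      rw [e3, f3, e2, f2, Nat.factorial_succ (m + 1), Nat.factorial_succ m]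
      push_cast
      field_simp
      ring

/-- Closed formula for the restricted Fubini number:
`F_{n, ≤ 2} = (n!/√3) * ((√3 - 1)^(-n-1) - (-√3 - 1)^(-n-1))`. -/
theorem restrictedFubini_closed_formula :
    ∀ n : ℕ, (restrictedFubini n : ℝ) =
      (Nat.factorial n : ℝ) / Real.sqrt 3 *
        ((Real.sqrt 3 - 1) ^ (-(n : ℤ) - 1) - (-Real.sqrt 3 - 1) ^ (-(n : ℤ) - 1)) := by
  intro n
  have hs : Real.sqrt 3 ^ 2 = 3 := Real.sq_sqrt (by norm_num)
  have hinv1 : (Real.sqrt 3 - 1)⁻¹ = (Real.sqrt 3 + 1) / 2 := by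
    rw [inv_eq_of_mul_eq_one_right]; nlinarith [hs]
  have hinv2 : (-Real.sqrt 3 - 1)⁻¹ = (1 - Real.sqrt 3) / 2 := by
    rw [inv_eq_of_mul_eq_one_right]; nlinarith [hs]
  have hexp : (-(n : ℤ) - 1) = -((n + 1 : ℕ) : ℤ) := by push_cast; ring
  rw [hexp, zpow_neg, zpow_neg, zpow_natCast, zpow_natCast, ← inv_pow, ← inv_pow,
    hinv1, hinv2]
  exact key_formula n
end
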